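/- arXiv:1211.0997 — 9 statements merged into one kernel-verified Lean document; each statement's English description precedes it below -/
import Mathlib

section
/- If p is a real polynomial in n variables (n ≥ 2) such that p(x)·(x₁+⋯+xₙ) has only nonnegative coefficients, and p has at least one negative coefficient, then p has at least n positive coefficients (i.e., at least n monomials appear in p with positive coefficient). -/
/-!
Fix `β` with `p_β < 0`. For each `i`, the coefficient of `x^β xᵢ` in `p · ℓ` is
`∑ₖ p_{β + eᵢ - eₖ}`, whose `k = i` term is `p_β < 0`; nonnegativity forces some `k ≠ i` with
`p_{β + eᵢ - eₖ} > 0`. These exponents are distinct for distinct `i`: the `i`-th coordinate of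
the `i`-th one is `βᵢ + 1`, that of any other is at most `βᵢ`.
-/

open MvPolynomial Finset

theorem Finsupp.injective_add_single_sub_single {σ : Type*} [DecidableEq σ] (β : σ →₀ ℕ)
    {j : σ → σ} (hj : ∀ i, j i ≠ i) :
    Function.Injective fun i => β + Finsupp.single i 1 - Finsupp.single (j i) 1 := by
  intro a b hab
  by_contra hne
  have ha := congrArg (· a) hab
  simp only [Finsupp.tsub_apply, Finsupp.add_apply, Finsupp.single_eq_same,
    Finsupp.single_eq_of_ne (hj a).symm, Finsupp.single_eq_of_ne hne] at ha
  omega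

namespace MvPolynomial

variable {σ R : Type*} [Fintype σ] [DecidableEq σ] [CommRing R]

theorem coeff_mul_sum_X (p : MvPolynomial σ R) (α : σ →₀ ℕ) :
    (p * ∑ i, X i).coeff α = ∑ k, if α k ≠ 0 then p.coeff (α - Finsupp.single k 1) else 0 := by
  rw [mul_sum, coeff_sum]
  refine sum_congr rfl fun k _ => ?_
  rw [coeff_mul_X']
  simp [Finsupp.mem_support_iff]

variable [LinearOrder R] [IsStrictOrderedRing R]

theorem exists_ne_coeff_add_single_sub_single_pos {p : MvPolynomial σ R} {β : σ →₀ ℕ}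
    (hβ : p.coeff β < 0) (i : σ) (h : 0 ≤ (p * ∑ i, X i).coeff (β + Finsupp.single i 1)) :
    ∃ k ≠ i, 0 < p.coeff (β + Finsupp.single i 1 - Finsupp.single k 1) := by
  by_contra! hle
  rw [coeff_mul_sum_X, ← add_sum_erase _ _ (mem_univ i), if_pos (by simp),
    add_tsub_cancel_right] at h
  have hrest : ∑ k ∈ univ.erase i, (if (β + Finsupp.single i 1 : σ →₀ ℕ) k ≠ 0 then
      p.coeff (β + Finsupp.single i 1 - Finsupp.single k 1) else 0) ≤ 0 :=
    sum_nonpos fun k hk => by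
      split_ifs
      exacts [hle k (ne_of_mem_erase hk), le_rfl]
  linarith

theorem card_le_card_filter_coeff_pos {p : MvPolynomial σ R}
    (hS : ∀ m, 0 ≤ (p * ∑ i, X i).coeff m) (hneg : ∃ β, p.coeff β < 0) :
    Fintype.card σ ≤ #{m ∈ p.support | 0 < p.coeff m} := by
  obtain ⟨β, hβ⟩ := hneg
  choose j hji hj using fun i => exists_ne_coeff_add_single_sub_single_pos hβ i (hS _)
  rw [← card_univ]
  refine card_le_card_of_injOn _ (fun i _ => ?_)
    (Finsupp.injective_add_single_sub_single β hji).injOn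
  simpa [mem_support_iff] using ⟨(hj i).ne', hj i⟩

end MvPolynomial

theorem stmt0_general (n : ℕ) (p : MvPolynomial (Fin n) ℝ)
    (hS : ∀ m : Fin n →₀ ℕ, 0 ≤ (p * ∑ i, X i).coeff m)
    (hneg : ∃ β : Fin n →₀ ℕ, p.coeff β < 0) :
    n ≤ (p.support.filter fun m => 0 < p.coeff m).card := by
  simpa using card_le_card_filter_coeff_pos hS hneg

theorem stmt0 (n : ℕ) (hn : 2 ≤ n) (p : MvPolynomial (Fin n) ℝ)
    (hS : ∀ m : Fin n →₀ ℕ, 0 ≤ (p * ∑ i, X i).coeff m)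
    (hneg : ∃ β : Fin n →₀ ℕ, p.coeff β < 0) :
    n ≤ (p.support.filter fun m => 0 < p.coeff m).card :=
  stmt0_general n p hS hneg
end

section
/- If p is a real polynomial in n variables (n ≥ 2) such that p(x)·(x₁+⋯+xₙ) has only nonnegative coefficients, then N₋ ≤ (n−1)·N₊, where N₊ and N₋ are the numbers of positive and negative coefficients of p respectively. -/
/-!
If `p` has a negative coefficient at `m`, the coefficient of `p · ℓ` at `m + e₀` is the sum of
the coefficients of `p` at the `m'` with `m' + e_j = m + e₀`; the summand `j = 0` is the negative
`p_m`, so since the sum is nonnegative some `j ≠ 0` gives a positive coefficient `p_{m'}`. Then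
`m = m' + e_j - e₀`, so the negative monomials are covered by the image of
(positive monomials) × (the `n - 1` indices `j ≠ 0`).
-/

open MvPolynomial

section

variable {σ R : Type*} [Fintype σ] [CommSemiring R] [LinearOrder R]
  [IsOrderedAddMonoid R]

theorem exists_pos_coeff_of_coeff_neg {p : MvPolynomial σ R}
    (hS : ∀ m, 0 ≤ (p * ∑ i, X i).coeff m) (i₀ : σ) {m : σ →₀ ℕ} (hm : p.coeff m < 0) :
    ∃ j ≠ i₀, ∃ m', m' + Finsupp.single j 1 = m + Finsupp.single i₀ 1 ∧ 0 < p.coeff m' := by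
  classical
  set d := m + Finsupp.single i₀ 1
  by_contra! hneg
  have hother : ∀ j ∈ Finset.univ.erase i₀, (p * X j).coeff d ≤ 0 := by
    intro j hj
    rw [coeff_mul_X']
    split_ifs with hjd
    · refine hneg j (Finset.ne_of_mem_erase hj) _ (tsub_add_cancel_of_le ?_)
      rw [Finsupp.single_le_iff]
      exact Nat.one_le_iff_ne_zero.mpr (Finsupp.mem_support_iff.mp hjd)
    · exact le_rfl
  have : (p * ∑ i, X i).coeff d < 0 := calc
    (p * ∑ i, X i).coeff d
        = (p * X i₀).coeff d + ∑ j ∈ Finset.univ.erase i₀, (p * X j).coeff d := by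
      rw [Finset.mul_sum, coeff_sum, (Finset.add_sum_erase _ _ (Finset.mem_univ i₀)).symm]
    _ ≤ p.coeff m + 0 := by
      rw [coeff_mul_X]
      exact add_le_add le_rfl (Finset.sum_nonpos hother)
    _ < 0 := by rwa [add_zero]
  exact (hS d).not_gt this

theorem card_neg_coeff_le_card_pos_coeff_mul [Nonempty σ] (p : MvPolynomial σ R)
    (hS : ∀ m, 0 ≤ (p * ∑ i, X i).coeff m) :
    (p.support.filter fun m => p.coeff m < 0).card ≤
      (p.support.filter fun m => 0 < p.coeff m).card * (Fintype.card σ - 1) := by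
  classical
  obtain ⟨i₀⟩ := ‹Nonempty σ›
  rw [← Finset.card_univ, ← Finset.card_erase_of_mem (Finset.mem_univ i₀), ← Finset.card_product]
  refine Finset.card_le_card_of_surjOn
    (fun x => x.1 + Finsupp.single x.2 1 - Finsupp.single i₀ 1) fun m hm => ?_
  obtain ⟨j, hj, m', hm', hpos⟩ :=
    exists_pos_coeff_of_coeff_neg hS i₀ (Finset.mem_filter.mp hm).2
  refine ⟨(m', j), ?_, by simp [hm']⟩
  simp [hj, hpos, hpos.ne']

end

theorem stmt1 (n : ℕ) (hn : 2 ≤ n) (p : MvPolynomial (Fin n) ℝ)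
    (hS : ∀ m : Fin n →₀ ℕ, 0 ≤ (p * ∑ i, X i).coeff m) :
    (p.support.filter fun m => p.coeff m < 0).card ≤
      (n - 1) * (p.support.filter fun m => 0 < p.coeff m).card := by
  have : Nonempty (Fin n) := ⟨⟨0, by omega⟩⟩
  simpa [mul_comm] using card_neg_coeff_le_card_pos_coeff_mul p hS
end

section
/- Suppose a negative coefficient of p occurs at multi-index β and all coefficients of p·(x₁+⋯+xₙ) are nonnegative. Then for each k ∈ {1,…,n} there exists a multi-index α(k) with positive coefficient in p and an index j with α(k)+e_j = β+e_k; moreover the multi-indices α(k) for distinct k are distinct. Here e_j is the j-th standard basis multi-index. -/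
/-!
Fix `k` and look at the coefficient of `p · (x₁ + ⋯ + xₙ)` at `m = β + e_k`: it is the sum of the
coefficients of `p` at `m - e_i` over the `i` with `m i ≠ 0`. The term `i = k` is `p_β < 0`, while
the sum is nonnegative, so some `j ≠ k` contributes a positive coefficient at `α(k) = m - e_j`.
Comparing `k`-th coordinates, `α(k) k = β k + 1`, whereas any `α` with `α + e_{j'} = β + e_{k'}`
and `k' ≠ k` has `α k ≤ β k`; hence `k ↦ α(k)` is injective.
-/

open MvPolynomial

theorem MvPolynomial.coeff_mul_sum_X_s3 {σ R : Type*} [Fintype σ] [CommSemiring R]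
    (p : MvPolynomial σ R) (m : σ →₀ ℕ) :
    (p * ∑ i, X i).coeff m = ∑ i ∈ m.support, p.coeff (m - Finsupp.single i 1) := by
  classical
  rw [Finset.mul_sum, coeff_sum]
  simp_rw [coeff_mul_X']
  rw [Finset.sum_ite_mem, Finset.univ_inter]

theorem Finsupp.eq_of_add_single_eq_add_single {σ : Type*} {α β : σ →₀ ℕ} {j j' k k' : σ}
    (h : α + single j 1 = β + single k 1) (h' : α + single j' 1 = β + single k' 1)
    (hjk : j ≠ k) : k' = k := by
  classical
  by_contra hk'
  have hk := DFunLike.congr_fun h k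
  have hk'' := DFunLike.congr_fun h' k
  simp only [coe_add, Pi.add_apply, single_apply, if_neg hjk, if_neg hk', if_true] at hk hk''
  omega

theorem MvPolynomial.exists_pos_coeff_add_single_eq {σ R : Type*} [Fintype σ] [CommRing R]
    [LinearOrder R] [IsOrderedRing R] {p : MvPolynomial σ R}
    (hS : ∀ m, 0 ≤ (p * ∑ i, X i).coeff m) {β : σ →₀ ℕ} (hβ : p.coeff β < 0) (k : σ) :
    ∃ α j, j ≠ k ∧ 0 < p.coeff α ∧ α + Finsupp.single j 1 = β + Finsupp.single k 1 := by
  classical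
  set m := β + Finsupp.single k 1
  have hk : k ∈ m.support := by simp [m]
  have hsum := hS m
  rw [coeff_mul_sum_X_s3, ← Finset.add_sum_erase _ _ hk, show m - Finsupp.single k 1 = β from
    add_tsub_cancel_right _ _] at hsum
  have hrest : 0 < ∑ i ∈ m.support.erase k, p.coeff (m - Finsupp.single i 1) :=
    (neg_pos.mpr hβ).trans_le (neg_le_iff_add_nonneg'.mpr hsum)
  obtain ⟨j, hj, hpos⟩ : ∃ j ∈ m.support.erase k, 0 < p.coeff (m - Finsupp.single j 1) :=
    Finset.exists_lt_of_sum_lt (by simpa using hrest)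
  obtain ⟨hjk, hjm⟩ := Finset.mem_erase.mp hj
  refine ⟨m - Finsupp.single j 1, j, hjk, hpos, tsub_add_cancel_of_le ?_⟩
  exact Finsupp.single_le_iff.mpr (Nat.one_le_iff_ne_zero.mpr (Finsupp.mem_support_iff.mp hjm))

theorem stmt3_general (n : ℕ) (p : MvPolynomial (Fin n) ℝ)
    (hS : ∀ m : Fin n →₀ ℕ, 0 ≤ (p * ∑ i, X i).coeff m)
    (β : Fin n →₀ ℕ) (hβ : p.coeff β < 0) :
    ∃ α : Fin n → (Fin n →₀ ℕ),
      (∀ k : Fin n, 0 < p.coeff (α k) ∧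
        ∃ j : Fin n, α k + Finsupp.single j 1 = β + Finsupp.single k 1) ∧
      Function.Injective α := by
  choose α j hjk hpos hα using exists_pos_coeff_add_single_eq hS hβ
  refine ⟨α, fun k => ⟨hpos k, j k, hα k⟩, fun a b hab => ?_⟩
  exact (Finsupp.eq_of_add_single_eq_add_single (hα a) (hab ▸ hα b) (hjk a)).symm

theorem stmt3 (n : ℕ) (hn : 2 ≤ n) (p : MvPolynomial (Fin n) ℝ)
    (hS : ∀ m : Fin n →₀ ℕ, 0 ≤ (p * ∑ i, X i).coeff m)
    (β : Fin n →₀ ℕ) (hβ : p.coeff β < 0) :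
    ∃ α : Fin n → (Fin n →₀ ℕ),
      (∀ k : Fin n, 0 < p.coeff (α k) ∧
        ∃ j : Fin n, α k + Finsupp.single j 1 = β + Finsupp.single k 1) ∧
      Function.Injective α :=
  stmt3_general n p hS β hβ
end

section
/- For every n ≥ 2 and every ε > 0, there exists a homogeneous real polynomial p in n variables such that p(x)·(x₁+⋯+xₙ) has only nonnegative coefficients and the ratio N₋/N₊ of negative to positive coefficients of p exceeds n − 1 − ε. -/
/-!
Write `n = m + 1` and let `x` be a multiple of `m + 1`. On the box `[0, x + 1]^m` put the
coefficient `m` or `-1` at a point `γ` of the inner box `[1, x]^m`, according as the weight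
`∑ (j + 1) γⱼ` is divisible by `m + 1` or not, and `m + 1` on the rest of the box; then homogenize
with the extra variable `x₀`. The coefficient of `p · ℓ` at a monomial is the sum of the
coefficients at the corresponding point `δ` and at its lower neighbours `δ - eⱼ`. Deep inside the
box these are `m + 1` points of weights `W, W - 1, …, W - m`, one in each residue class, so the
sum is `m - m = 0`; elsewhere a coefficient `m + 1` (or the vanishing of `p` outside the box)
outweighs the at most `m` entries `-1`. Shifting one coordinate cyclically through `[1, x]` shows
that the weights are equidistributed modulo `m + 1`, so `N₋ = m xᵐ / (m + 1)` and
`N₊ = (x + 2)ᵐ - N₋`, whose ratio tends to `m = n - 1` as `x → ∞`.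
-/

open Finset MvPolynomial Filter Topology

namespace NegCoeffRatio

section Homogenize

variable {R : Type*} {m : ℕ}

def lowerNeighbourSum [AddCommMonoid R] (f : (Fin m → ℕ) → R) (δ : Fin m → ℕ) : R :=
  f δ + ∑ j, if δ j = 0 then 0 else f (Function.update δ j (δ j - 1))

variable [CommSemiring R]

/-- The homogenization of degree `D` in the variable `x₀` of `∑ γ, f γ • x^γ`; terms with
`∑ j, γ j > D` are dropped. -/
noncomputable def homogenizeCoeff (D : ℕ) (f : (Fin m → ℕ) → R) : MvPolynomial (Fin (m + 1)) R :=
  ∑ β ∈ univ.finsuppAntidiag D, monomial β (f (Fin.tail β))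

variable {D : ℕ} {f : (Fin m → ℕ) → R}

lemma coeff_homogenizeCoeff (β : Fin (m + 1) →₀ ℕ) :
    coeff β (homogenizeCoeff D f) = if β.degree = D then f (Fin.tail β) else 0 := by
  simp [homogenizeCoeff, coeff_sum, coeff_monomial, Finsupp.degree_eq_sum]

lemma isHomogeneous_homogenizeCoeff : (homogenizeCoeff D f).IsHomogeneous D := by
  refine IsHomogeneous.sum _ _ _ fun β hβ ↦ isHomogeneous_monomial _ ?_
  simpa [Finsupp.degree_eq_sum] using hβ

lemma coeff_mul_sum_X {σ : Type*} [Fintype σ] [DecidableEq σ] (p : MvPolynomial σ R)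
    (β : σ →₀ ℕ) :
    coeff β (p * ∑ i, X i) =
      ∑ i, if i ∈ β.support then coeff (β - Finsupp.single i 1) p else 0 := by
  simp only [mul_sum, coeff_sum, coeff_mul_X']

lemma degree_sub_single_add_one {σ : Type*} {β : σ →₀ ℕ} {i : σ} (h : β i ≠ 0) :
    (β - Finsupp.single i 1).degree + 1 = β.degree := by
  have hle : Finsupp.single i 1 ≤ β := Finsupp.single_le_iff.2 (Nat.one_le_iff_ne_zero.2 h)
  have := map_add Finsupp.degree (β - Finsupp.single i 1) (Finsupp.single i 1)
  rwa [tsub_add_cancel_of_le hle, Finsupp.degree_single, eq_comm] at this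

lemma tail_sub_single_zero (β : Fin (m + 1) →₀ ℕ) :
    Fin.tail ⇑(β - Finsupp.single 0 1 : Fin (m + 1) →₀ ℕ) = Fin.tail ⇑β := by
  ext j
  simp [Fin.tail]

lemma tail_sub_single_succ (β : Fin (m + 1) →₀ ℕ) (j : Fin m) :
    Fin.tail ⇑(β - Finsupp.single j.succ 1 : Fin (m + 1) →₀ ℕ) =
      Function.update (Fin.tail ⇑β) j (β j.succ - 1) := by
  ext i
  rcases eq_or_ne i j with rfl | h
  · simp [Fin.tail]
  · simp [Fin.tail, Function.update_of_ne h, h.symm]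

lemma coeff_homogenizeCoeff_mul_sum_X (hf : ∀ γ, D < ∑ j, γ j → f γ = 0)
    (β : Fin (m + 1) →₀ ℕ) :
    coeff β (homogenizeCoeff D f * ∑ i, X i) =
      if β.degree = D + 1 then lowerNeighbourSum f (Fin.tail β) else 0 := by
  have hterm : ∀ i, (if i ∈ β.support then coeff (β - Finsupp.single i 1) (homogenizeCoeff D f)
      else 0) = if β.degree = D + 1 ∧ β i ≠ 0 then
        f (Fin.tail ⇑(β - Finsupp.single i 1 : Fin (m + 1) →₀ ℕ)) else 0 := by
    intro i
    simp only [Finsupp.mem_support_iff, coeff_homogenizeCoeff]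
    by_cases hi : β i = 0
    · simp [hi]
    · simp only [hi, ne_eq, not_false_eq_true, if_true, and_true,
        ← degree_sub_single_add_one hi, Nat.add_right_cancel_iff]
  rw [coeff_mul_sum_X, Fin.sum_univ_succ]
  simp only [hterm, tail_sub_single_zero, tail_sub_single_succ]
  by_cases hdeg : β.degree = D + 1
  · have h0 : (if β 0 = 0 then 0 else f (Fin.tail β)) = f (Fin.tail β) := by
      split_ifs with h
      · refine (hf _ ?_).symm
        rw [Finsupp.degree_eq_sum, Fin.sum_univ_succ, h, zero_add] at hdeg
        simp only [Fin.tail, hdeg, Nat.lt_succ_self]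
      · rfl
    simp only [hdeg, true_and, if_true, ite_not]
    rw [h0]
    rfl
  · simp [hdeg]

lemma card_filter_coeff_homogenizeCoeff {S : Finset (Fin m → ℕ)} (hS : ∀ γ ∈ S, ∑ j, γ j ≤ D)
    (hf : ∀ γ, f γ ≠ 0 → γ ∈ S) (P : R → Prop) [DecidablePred P] (hP : ¬ P 0) :
    #{β ∈ (homogenizeCoeff D f).support | P (coeff β (homogenizeCoeff D f))} =
      #{γ ∈ S | P (f γ)} := by
  let lift : (Fin m → ℕ) → Fin (m + 1) →₀ ℕ := fun γ ↦
    Finsupp.equivFunOnFinite.symm (Fin.cons (D - ∑ j, γ j) γ)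
  have tail_lift : ∀ γ, Fin.tail ⇑(lift γ) = γ := fun γ ↦ by simp [lift]
  have degree_lift : ∀ γ ∈ S, (lift γ).degree = D := fun γ hγ ↦ by
    simp [lift, Finsupp.degree_eq_sum, Fin.sum_univ_succ, Nat.sub_add_cancel (hS γ hγ)]
  have of_P : ∀ β, P (coeff β (homogenizeCoeff D f)) → β.degree = D ∧ P (f (Fin.tail β)) :=
    fun β h ↦ by
      rw [coeff_homogenizeCoeff] at h
      split_ifs at h with hβ
      · exact ⟨hβ, h⟩
      · exact absurd h hP
  refine card_nbij' (fun β ↦ Fin.tail β) lift ?_ ?_ ?_ ?_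
  · intro β hβ
    simp only [mem_coe, mem_filter] at hβ ⊢
    obtain ⟨-, h⟩ := of_P β hβ.2
    exact ⟨hf _ fun h0 ↦ hP (h0 ▸ h), h⟩
  · intro γ hγ
    simp only [mem_coe, mem_filter, mem_support_iff] at hγ ⊢
    rw [coeff_homogenizeCoeff, if_pos (degree_lift γ hγ.1), tail_lift]
    exact ⟨fun h0 ↦ hP (h0 ▸ hγ.2), hγ.2⟩
  · intro β hβ
    simp only [mem_coe, mem_filter] at hβ
    have hdeg := (of_P β hβ.2).1
    rw [Finsupp.degree_eq_sum, Fin.sum_univ_succ] at hdeg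
    ext i
    refine Fin.cases ?_ (fun j ↦ ?_) i
    · simp [lift, Fin.tail, ← hdeg]
    · simp [lift, Fin.tail]
  · intro γ _
    exact tail_lift γ

end Homogenize

section Pattern

variable (m x : ℕ)

def box : Finset (Fin m → ℕ) := Fintype.piFinset fun _ ↦ range (x + 2)

def innerBox : Finset (Fin m → ℕ) := Fintype.piFinset fun _ ↦ Icc 1 x

def weight (γ : Fin m → ℕ) : ZMod (m + 1) := ∑ j : Fin m, ((j : ℕ) + 1) * (γ j : ZMod (m + 1))

def pattern (γ : Fin m → ℕ) : ℝ :=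
  if γ ∈ innerBox m x then (if weight m γ = 0 then m else -1)
  else if γ ∈ box m x then m + 1 else 0

variable {m x}

lemma mem_box {γ : Fin m → ℕ} : γ ∈ box m x ↔ ∀ j, γ j ≤ x + 1 := by
  simp [box, Nat.lt_succ_iff]

lemma mem_innerBox {γ : Fin m → ℕ} : γ ∈ innerBox m x ↔ ∀ j, 1 ≤ γ j ∧ γ j ≤ x := by
  simp [innerBox]

lemma innerBox_subset_box : innerBox m x ⊆ box m x := by
  intro γ h
  rw [mem_innerBox] at h
  exact mem_box.2 fun j ↦ by have := (h j).2; omega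

lemma weight_update (γ : Fin m → ℕ) (j : Fin m) (v : ℕ) :
    weight m (Function.update γ j v) =
      weight m γ + ((j : ℕ) + 1) * ((v : ZMod (m + 1)) - γ j) := by
  unfold weight
  rw [← sum_erase_add _ _ (mem_univ j), ← sum_erase_add _ _ (mem_univ j),
    sum_congr rfl fun i hi ↦ by rw [Function.update_of_ne (ne_of_mem_erase hi)],
    Function.update_self]
  ring

lemma neg_one_le_pattern (γ : Fin m → ℕ) : -1 ≤ pattern m x γ := by
  unfold pattern; split_ifs <;> linarith [(m.cast_nonneg : (0 : ℝ) ≤ m)]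

lemma pattern_nonneg_of_lt {γ : Fin m → ℕ} {j : Fin m} (h : x < γ j) : 0 ≤ pattern m x γ := by
  have : γ ∉ innerBox m x := fun hγ ↦ by have := (mem_innerBox.1 hγ j).2; omega
  unfold pattern; split_ifs <;> linarith [(m.cast_nonneg : (0 : ℝ) ≤ m)]

lemma pattern_eq_zero_of_notMem_box {γ : Fin m → ℕ} (h : γ ∉ box m x) : pattern m x γ = 0 := by
  rw [pattern, if_neg (fun h' ↦ h (innerBox_subset_box h')), if_neg h]

lemma pattern_of_mem_box_of_notMem_innerBox {γ : Fin m → ℕ} (h : γ ∈ box m x)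
    (h' : γ ∉ innerBox m x) : pattern m x γ = m + 1 := by
  rw [pattern, if_neg h', if_pos h]

lemma pattern_update_zero {γ : Fin m → ℕ} (h : γ ∈ box m x) (j : Fin m) :
    pattern m x (Function.update γ j 0) = m + 1 := by
  refine pattern_of_mem_box_of_notMem_innerBox (mem_box.2 fun i ↦ ?_) fun h' ↦ ?_
  · rcases eq_or_ne i j with rfl | hij
    · simp
    · simpa [Function.update_of_ne hij] using mem_box.1 h i
  · simpa using (mem_innerBox.1 h' j).1

lemma pattern_ne_zero_of_mem_box (hm : m ≠ 0) {γ : Fin m → ℕ} (h : γ ∈ box m x) :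
    pattern m x γ ≠ 0 := by
  have : (0 : ℝ) < m := by positivity
  unfold pattern; split_ifs <;> linarith

lemma sum_range_sub_natCast {M : Type*} [AddCommMonoid M] (W : ZMod (m + 1))
    (g : ZMod (m + 1) → M) :
    ∑ k ∈ range (m + 1), g (W - k) = ∑ r, g r := by
  rw [← Fin.sum_univ_eq_sum_range (fun k ↦ g (W - k))]
  change ∑ k : ZMod (m + 1), g (W - (k.val : ZMod (m + 1))) = _
  simp only [ZMod.natCast_zmod_val]
  exact Fintype.sum_equiv (Equiv.subLeft W) _ _ fun _ ↦ rfl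

lemma lowerNeighbourSum_pattern_eq_zero_of_two_le {δ : Fin m → ℕ} (hδ : δ ∈ innerBox m x)
    (h2 : ∀ j, 2 ≤ δ j) : lowerNeighbourSum (pattern m x) δ = 0 := by
  rw [mem_innerBox] at hδ
  let g : ZMod (m + 1) → ℝ := fun r ↦ if r = 0 then m else -1
  have hg : ∑ r, g r = 0 := by
    rw [Fintype.sum_eq_add_sum_compl 0,
      sum_congr rfl fun r hr ↦ if_neg (mem_compl.1 hr ∘ mem_singleton.2)]
    simp [g, card_compl]
  have hterm : ∀ j : Fin m, (if δ j = 0 then 0 else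
      pattern m x (Function.update δ j (δ j - 1))) = g (weight m δ - ((j + 1 : ℕ) : ZMod (m + 1))) := by
    intro j
    have hmem : Function.update δ j (δ j - 1) ∈ innerBox m x := mem_innerBox.2 fun i ↦ by
      rcases eq_or_ne i j with rfl | hij
      · simp only [Function.update_self]; have := h2 i; have := hδ i; omega
      · simpa [Function.update_of_ne hij] using hδ i
    rw [if_neg (by have := h2 j; omega), pattern, if_pos hmem, weight_update,
      Nat.cast_sub (by have := h2 j; omega)]
    simp only [g, Nat.cast_succ]
    ring_nf
  rw [lowerNeighbourSum, sum_congr rfl fun j _ ↦ hterm j, pattern, if_pos (mem_innerBox.2 hδ),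
    Fin.sum_univ_eq_sum_range (fun k ↦ g (weight m δ - ((k + 1 : ℕ) : ZMod (m + 1)))),
    ← hg, ← sum_range_sub_natCast (weight m δ), sum_range_succ' _ m]
  simp [g, add_comm]

lemma lowerNeighbourSum_pattern_nonneg_of_lt {δ : Fin m → ℕ} {j : Fin m} (hj : x + 1 < δ j) :
    0 ≤ lowerNeighbourSum (pattern m x) δ := by
  have hbox : δ ∉ box m x := fun h ↦ by have := mem_box.1 h j; omega
  rw [lowerNeighbourSum, pattern_eq_zero_of_notMem_box hbox, zero_add]
  refine sum_nonneg fun i _ ↦ ?_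
  split_ifs
  · exact le_rfl
  · refine pattern_nonneg_of_lt (j := j) ?_
    rcases eq_or_ne j i with rfl | hji
    · simp only [Function.update_self]; omega
    · simp only [Function.update_of_ne hji]; omega

theorem lowerNeighbourSum_pattern_nonneg (δ : Fin m → ℕ) :
    0 ≤ lowerNeighbourSum (pattern m x) δ := by
  by_cases hbox : δ ∉ box m x
  · obtain ⟨j, hj⟩ : ∃ j, x + 1 < δ j := by simpa [mem_box] using hbox
    exact lowerNeighbourSum_pattern_nonneg_of_lt hj
  rw [not_not] at hbox
  set T : Fin m → ℝ := fun j ↦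
    if δ j = 0 then 0 else pattern m x (Function.update δ j (δ j - 1))
  have hT : ∀ j, 0 ≤ T j + 1 := fun j ↦ by
    simp only [T]; split_ifs
    · norm_num
    · linarith [neg_one_le_pattern (m := m) (x := x) (Function.update δ j (δ j - 1))]
  have hsum : ∑ j, (T j + 1) = ∑ j, T j + m := by simp [sum_add_distrib]
  have hS : 0 ≤ ∑ j, (T j + 1) := sum_nonneg fun j _ ↦ hT j
  change 0 ≤ pattern m x δ + ∑ j, T j
  by_cases hin : δ ∈ innerBox m x
  · by_cases h2 : ∀ j, 2 ≤ δ j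
    · exact (lowerNeighbourSum_pattern_eq_zero_of_two_le hin h2).ge
    push Not at h2
    obtain ⟨j₀, hj₀⟩ := h2
    have hone : δ j₀ = 1 := by have := (mem_innerBox.1 hin j₀).1; omega
    have hTj₀ : T j₀ = m + 1 := by
      simp only [T, hone, if_neg one_ne_zero, Nat.sub_self, pattern_update_zero hbox]
    have := single_le_sum (fun j _ ↦ hT j) (mem_univ j₀)
    linarith [neg_one_le_pattern (m := m) (x := x) δ]
  · rw [pattern_of_mem_box_of_notMem_innerBox hbox hin]
    linarith

end Pattern

section Counting

variable {m x : ℕ}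

-- Rotating the first coordinate cyclically through `[1, x]` raises the weight by one,
-- since `x ≡ 0 [MOD m + 1]`.
lemma card_filter_weight_succ (hm : m ≠ 0) (hx : (x : ZMod (m + 1)) = 0) (r : ZMod (m + 1)) :
    #{γ ∈ innerBox m x | weight m γ = r + 1} = #{γ ∈ innerBox m x | weight m γ = r} := by
  let j₀ : Fin m := ⟨0, Nat.pos_of_ne_zero hm⟩
  have hw : ∀ γ v, weight m (Function.update γ j₀ v) = weight m γ + ((v : ZMod (m + 1)) - γ j₀) :=
    fun γ v ↦ by simp [weight_update, j₀]
  have hupd : ∀ γ v, γ ∈ innerBox m x → 1 ≤ v → v ≤ x →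
      Function.update γ j₀ v ∈ innerBox m x := fun γ v hγ h1 h2 ↦ mem_innerBox.2 fun i ↦ by
    rcases eq_or_ne i j₀ with rfl | h
    · simp [h1, h2]
    · simpa [Function.update_of_ne h] using mem_innerBox.1 hγ i
  refine card_nbij' (fun γ ↦ Function.update γ j₀ (if γ j₀ = 1 then x else γ j₀ - 1))
    (fun γ ↦ Function.update γ j₀ (if γ j₀ = x then 1 else γ j₀ + 1)) ?_ ?_ ?_ ?_
  · intro γ hγ
    simp only [mem_coe, mem_filter] at hγ ⊢
    have := mem_innerBox.1 hγ.1 j₀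
    refine ⟨hupd _ _ hγ.1 (by split_ifs <;> omega) (by split_ifs <;> omega), ?_⟩
    rw [hw, hγ.2]
    split_ifs with h
    · rw [hx, h]; ring
    · rw [Nat.cast_sub (by omega)]; ring
  · intro γ hγ
    simp only [mem_coe, mem_filter] at hγ ⊢
    have := mem_innerBox.1 hγ.1 j₀
    refine ⟨hupd _ _ hγ.1 (by split_ifs <;> omega) (by split_ifs <;> omega), ?_⟩
    rw [hw, hγ.2]
    split_ifs with h
    · rw [h, hx]; push_cast; ring
    · push_cast; ring
  all_goals
    intro γ hγ
    simp only [mem_coe, mem_filter] at hγ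
    have := mem_innerBox.1 hγ.1 j₀
    simp only [Function.update_self, Function.update_idem]
    convert Function.update_eq_self j₀ γ using 2
    split_ifs <;> omega

lemma card_filter_weight_eq (hm : m ≠ 0) (hx : (x : ZMod (m + 1)) = 0) (r : ZMod (m + 1)) :
    #{γ ∈ innerBox m x | weight m γ = r} = #{γ ∈ innerBox m x | weight m γ = 0} := by
  suffices h : ∀ k : ℕ,
      #{γ ∈ innerBox m x | weight m γ = k} = #{γ ∈ innerBox m x | weight m γ = 0} by
    simpa using h r.val
  intro k
  induction k with
  | zero => simp
  | succ k ih => rw [Nat.cast_succ, card_filter_weight_succ hm hx, ih]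

lemma card_innerBox : #(innerBox m x) = x ^ m := by
  simp [innerBox]

lemma card_box : #(box m x) = (x + 2) ^ m := by
  simp [box]

lemma succ_mul_card_filter_weight_eq_zero (hm : m ≠ 0) (hx : (x : ZMod (m + 1)) = 0) :
    (m + 1) * #{γ ∈ innerBox m x | weight m γ = 0} = x ^ m := by
  rw [← card_innerBox,
    card_eq_sum_card_fiberwise (s := innerBox m x) (f := weight m) (t := univ) fun _ _ ↦ mem_univ _,
    sum_congr rfl fun r _ ↦ card_filter_weight_eq hm hx r]
  simp

lemma filter_pattern_neg :
    {γ ∈ box m x | pattern m x γ < 0} = {γ ∈ innerBox m x | weight m γ ≠ 0} := by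
  ext γ
  rw [mem_filter, mem_filter, pattern]
  have : (0 : ℝ) ≤ m := m.cast_nonneg
  by_cases hin : γ ∈ innerBox m x
  · split_ifs <;> simp_all [innerBox_subset_box hin]
  · split_ifs <;> simp_all; linarith

lemma succ_mul_card_pattern_neg (hm : m ≠ 0) (hx : (x : ZMod (m + 1)) = 0) :
    (m + 1) * #{γ ∈ box m x | pattern m x γ < 0} = m * x ^ m := by
  have h := card_filter_add_card_filter_not (s := innerBox m x) (p := fun γ ↦ weight m γ = 0)
  rw [card_innerBox] at h
  have h0 := succ_mul_card_filter_weight_eq_zero hm hx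
  rw [filter_pattern_neg]
  nlinarith

lemma card_pattern_pos_add_card_pattern_neg (hm : m ≠ 0) :
    #{γ ∈ box m x | 0 < pattern m x γ} + #{γ ∈ box m x | pattern m x γ < 0} = (x + 2) ^ m := by
  rw [← card_box, ← card_filter_add_card_filter_not (s := box m x) (p := (0 < pattern m x ·))]
  congr 2
  refine filter_congr fun γ hγ ↦ ?_
  have := pattern_ne_zero_of_mem_box hm hγ
  exact ⟨fun h h' ↦ by linarith, fun h ↦ lt_of_le_of_ne (not_lt.1 h) this⟩

end Counting

section Witness

variable {m x : ℕ}

lemma sum_le_of_mem_box {γ : Fin m → ℕ} (h : γ ∈ box m x) : ∑ j, γ j ≤ m * (x + 1) := by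
  simpa using sum_le_sum (s := univ) fun j _ ↦ mem_box.1 h j

lemma coeff_homogenizeCoeff_pattern_mul_sum_X_nonneg (β : Fin (m + 1) →₀ ℕ) :
    0 ≤ coeff β (homogenizeCoeff (m * (x + 1)) (pattern m x) * ∑ i, X i) := by
  rw [coeff_homogenizeCoeff_mul_sum_X fun γ hγ ↦
    pattern_eq_zero_of_notMem_box fun h ↦ (sum_le_of_mem_box h).not_gt hγ]
  split_ifs
  · exact lowerNeighbourSum_pattern_nonneg _
  · exact le_rfl

lemma card_filter_coeff_homogenizeCoeff_pattern (P : ℝ → Prop) [DecidablePred P] (hP : ¬ P 0) :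
    #{β ∈ (homogenizeCoeff (m * (x + 1)) (pattern m x)).support |
      P (coeff β (homogenizeCoeff (m * (x + 1)) (pattern m x)))} =
      #{γ ∈ box m x | P (pattern m x γ)} :=
  card_filter_coeff_homogenizeCoeff (fun _ ↦ sum_le_of_mem_box)
    (fun _ h ↦ not_not.1 (mt pattern_eq_zero_of_notMem_box h)) P hP

end Witness

lemma tendsto_ratio_atTop (m : ℕ) :
    Tendsto (fun x : ℝ ↦ m * x ^ m / ((m + 1) * (x + 2) ^ m - m * x ^ m)) atTop (𝓝 m) := by
  have h0 : Tendsto (fun x : ℝ ↦ 2 / x) atTop (𝓝 0) := tendsto_const_nhds.div_atTop tendsto_id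
  have h1 : Tendsto (fun x : ℝ ↦ (m + 1) * (1 + 2 / x) ^ m - m) atTop (𝓝 1) := by
    simpa using (((h0.const_add 1).pow m).const_mul ((m : ℝ) + 1)).sub_const (m : ℝ)
  have h2 : Tendsto (fun x : ℝ ↦ m / ((m + 1) * (1 + 2 / x) ^ m - m)) atTop (𝓝 m) := by
    simpa [div_eq_mul_inv] using (h1.inv₀ one_ne_zero).const_mul (m : ℝ)
  refine h2.congr' ?_
  filter_upwards [eventually_gt_atTop 0] with x hx
  have hx' : x ^ m ≠ 0 := by positivity
  rw [show 1 + 2 / x = (x + 2) / x by field_simp, div_pow, ← mul_div_assoc, div_sub' hx',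
    div_div_eq_mul_div]
  ring

lemma div_eq_of_succ_mul_eq {m : ℕ} {x N P : ℝ} (hN : (m + 1) * N = m * x ^ m)
    (hP : P + N = (x + 2) ^ m) :
    N / P = m * x ^ m / ((m + 1) * (x + 2) ^ m - m * x ^ m) := by
  rw [← hN, ← hP, show (m + 1) * (P + N) - (m + 1) * N = (m + 1) * P by ring,
    mul_div_mul_left _ _ (by positivity)]

end NegCoeffRatio

open NegCoeffRatio in
theorem stmt5 (n : ℕ) (hn : 2 ≤ n) (ε : ℝ) (hε : 0 < ε) :
    ∃ (D : ℕ) (p : MvPolynomial (Fin n) ℝ), p.IsHomogeneous D ∧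
      (∀ m : Fin n →₀ ℕ, 0 ≤ (p * ∑ i, X i).coeff m) ∧
      ((n : ℝ) - 1 - ε) <
        ((p.support.filter fun m => p.coeff m < 0).card : ℝ) /
          ((p.support.filter fun m => 0 < p.coeff m).card : ℝ) := by
  obtain ⟨m, rfl⟩ : ∃ m, n = m + 1 := ⟨n - 1, by omega⟩
  have hm : m ≠ 0 := by omega
  obtain ⟨T, hT⟩ := (((tendsto_ratio_atTop m).comp
    (tendsto_natCast_atTop_atTop.const_mul_atTop (by positivity : (0 : ℝ) < m + 1))).eventually
      (lt_mem_nhds (by linarith : (m : ℝ) - ε < m))).exists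
  have hx : (((m + 1) * T : ℕ) : ZMod (m + 1)) = 0 := by simp
  refine ⟨_, _, isHomogeneous_homogenizeCoeff,
    coeff_homogenizeCoeff_pattern_mul_sum_X_nonneg (x := (m + 1) * T), ?_⟩
  rw [card_filter_coeff_homogenizeCoeff_pattern (· < 0) (lt_irrefl 0),
    card_filter_coeff_homogenizeCoeff_pattern (0 < ·) (lt_irrefl 0),
    div_eq_of_succ_mul_eq (x := (((m + 1) * T : ℕ) : ℝ))
      (by exact_mod_cast succ_mul_card_pattern_neg hm hx)
      (by exact_mod_cast card_pattern_pos_add_card_pattern_neg hm)]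
  simpa using hT
end

section
/- For the family p_D defined by the γ-coefficients (with n fixed, D → ∞), the ratio N₋(p_D)/N₊(p_D) tends to n − 1 as D → ∞. In particular, N₋(p_D) ≥ ((n−1)/n)·C(D−n, n−1) and N₊(p_D) = C(D+n−1, n−1) − N₋(p_D). -/
/-!
Every monomial of degree `D` has a nonzero coefficient, so `N₊ + N₋ = C(D+n-1, n-1)`.
For a monomial `β` of degree `D - (2n-1)` and `j = 0, …, n-1`, the monomials
`β · x₀^j · x_{n-1}^(n-1-j) · x₀ ⋯ x_{n-1}` are distinct, of degree `D` with all exponents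
positive, and, as `x₀` and `x_{n-1}` have weights `1` and `0`, their weights `Σ k α_k` are `n`
consecutive integers: exactly one of them gets the coefficient `n - 1` and the other `n - 1` get
`-1`. Double counting over the `C(D-n, n-1)` monomials `β` gives `n N₋ ≥ (n-1) C(D-n, n-1)` and
`n N₊ ≥ C(D-n, n-1)`. As `C(D-n, n-1) ~ C(D+n-1, n-1)`, the fractions `N₋ / (N₊ + N₋)` and
`N₊ / (N₊ + N₋)` tend to `(n-1)/n` and `1/n`.
-/

open MvPolynomial Filter Finset Finsupp Asymptotics Topology

theorem Finset.mul_card_le_card_mul_card_of_injOn {ι β α : Type*} [Fintype ι]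
    (B : Finset β) (S : Finset α) (P : ι → β → Prop) [∀ i b, Decidable (P i b)]
    (f : ι → β → α) (k : ℕ) (hk : ∀ b ∈ B, k ≤ #{i | P i b})
    (hf : ∀ i, ∀ b ∈ B, P i b → f i b ∈ S) (hinj : ∀ i, Set.InjOn (f i) B) :
    k * #B ≤ Fintype.card ι * #S := by
  calc k * #B = ∑ _b ∈ B, k := by rw [sum_const, smul_eq_mul, mul_comm]
    _ ≤ ∑ b ∈ B, #{i | P i b} := sum_le_sum hk
    _ = ∑ i, #{b ∈ B | P i b} := by simp only [card_filter]; exact sum_comm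
    _ ≤ ∑ _i : ι, #S := sum_le_sum fun i _ ↦ card_le_card_of_injOn (f i)
        (fun b hb ↦ by rw [coe_filter] at hb; exact hf i b hb.1 hb.2)
        ((hinj i).mono fun b hb ↦ by rw [coe_filter] at hb; exact hb.1)
    _ = Fintype.card ι * #S := by rw [sum_const, smul_eq_mul, card_univ]

theorem Finset.card_finsuppAntidiag_univ_fin {n : ℕ} (hn : 1 ≤ n) (E : ℕ) :
    #(univ.finsuppAntidiag E : Finset (Fin n →₀ ℕ)) = (E + (n - 1)).choose (n - 1) := by
  rw [card_finsuppAntidiag_nat_eq_choose, card_univ, Fintype.card_fin,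
    show n + E - 1 = E + (n - 1) by omega, Nat.choose_symm_add]

theorem Finset.mem_finsuppAntidiag_univ {σ : Type*} [Fintype σ] [DecidableEq σ] {E : ℕ}
    {α : σ →₀ ℕ} : α ∈ univ.finsuppAntidiag E ↔ α.degree = E := by
  simp [degree_eq_sum]

theorem Int.emod_add_natCast_eq_zero_iff {n j : ℕ} (hj : j < n) (A : ℤ) :
    (A + j) % n = 0 ↔ (j : ℤ) = (-A) % n := by
  have hjmod : (j : ℤ) % n = j := Int.emod_eq_of_lt (by positivity) (by exact_mod_cast hj)
  calc (A + j) % n = 0 ↔ (n : ℤ) ∣ -A - j := by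
        rw [← Int.dvd_iff_emod_eq_zero, ← dvd_neg, neg_add']
    _ ↔ (j : ℤ) % n = (-A) % n := Int.modEq_iff_dvd.symm
    _ ↔ (j : ℤ) = (-A) % n := by rw [hjmod]

theorem Int.card_filter_emod_add_eq_zero {n : ℕ} (hn : 0 < n) (A : ℤ) :
    #{j : Fin n | (A + j) % n = 0} = 1 := by
  have hr := Int.emod_lt_of_pos (-A) (by exact_mod_cast hn : (0 : ℤ) < n)
  have hr' := Int.emod_nonneg (-A) (by omega : (n : ℤ) ≠ 0)
  rw [card_eq_one]
  refine ⟨⟨((-A) % n).toNat, by omega⟩, ?_⟩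
  ext j
  simp only [mem_filter, mem_univ, true_and, mem_singleton,
    Int.emod_add_natCast_eq_zero_iff j.isLt, Fin.ext_iff]
  omega

theorem MvPolynomial.card_filter_coeff_neg_add_card_filter_coeff_pos {σ R : Type*}
    [CommSemiring R] [LinearOrder R] (p : MvPolynomial σ R) :
    #{m ∈ p.support | p.coeff m < 0} + #{m ∈ p.support | 0 < p.coeff m} = #p.support := by
  have hpos : {m ∈ p.support | 0 < p.coeff m} = {m ∈ p.support | ¬ p.coeff m < 0} :=
    Finset.filter_congr fun m hm ↦ by
      rw [not_lt, lt_iff_le_and_ne, and_iff_left (MvPolynomial.mem_support_iff.mp hm).symm]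
  rw [hpos, card_filter_add_card_filter_not]

theorem isEquivalent_choose_add (s k : ℕ) :
    (fun D : ℕ ↦ ((D + s).choose k : ℝ)) ~[atTop] fun D ↦ (D.choose k : ℝ) := by
  have hshift : (fun D : ℕ ↦ ((D + s : ℕ) : ℝ)) ~[atTop] fun D ↦ (D : ℝ) := by
    refine (isEquivalent_of_tendsto_one ?_).symm
    simpa [Pi.div_def] using tendsto_natCast_div_add_atTop (s : ℝ)
  exact ((isEquivalent_choose k).comp_tendsto (tendsto_add_atTop_nat s)).trans
    (((hshift.pow k).div IsEquivalent.refl).trans (isEquivalent_choose k).symm)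

theorem isEquivalent_choose_sub (s k : ℕ) :
    (fun D : ℕ ↦ ((D - s).choose k : ℝ)) ~[atTop] fun D ↦ (D.choose k : ℝ) := by
  refine ((isEquivalent_choose_add s k).comp_tendsto (tendsto_sub_atTop_nat s)).symm.congr_right ?_
  filter_upwards [eventually_ge_atTop s] with D hD
  simp [Nat.sub_add_cancel hD]

theorem tendsto_choose_sub_div_choose_add (a b k : ℕ) :
    Tendsto (fun D : ℕ ↦ ((D - a).choose k : ℝ) / ((D + b).choose k : ℝ)) atTop (𝓝 1) := by
  have hpos : ∀ᶠ D : ℕ in atTop, ((D + b).choose k : ℝ) ≠ 0 := by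
    filter_upwards [eventually_ge_atTop k] with D hD
    exact_mod_cast (Nat.choose_pos (by omega)).ne'
  exact (isEquivalent_iff_tendsto_one hpos).mp
    ((isEquivalent_choose_sub a k).trans (isEquivalent_choose_add b k).symm)

theorem tendsto_div_of_add_eq {ι : Type*} {l : Filter ι} {x y T B : ι → ℝ} {a b : ℝ}
    (hab : a + b = 1) (hb : b ≠ 0) (hT : ∀ᶠ i in l, 0 < T i) (hxy : ∀ᶠ i in l, x i + y i = T i)
    (hx : ∀ᶠ i in l, a * B i ≤ x i) (hy : ∀ᶠ i in l, b * B i ≤ y i)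
    (hBT : Tendsto (fun i ↦ B i / T i) l (𝓝 1)) :
    Tendsto (fun i ↦ x i / y i) l (𝓝 (a / b)) := by
  have hfrac : ∀ {x y : ι → ℝ} {a b : ℝ}, a + b = 1 → (∀ᶠ i in l, x i + y i = T i) →
      (∀ᶠ i in l, a * B i ≤ x i) → (∀ᶠ i in l, b * B i ≤ y i) →
      Tendsto (fun i ↦ x i / T i) l (𝓝 a) := by
    intro x y a b hab hxy hx hy
    have lower : Tendsto (fun i ↦ a * (B i / T i)) l (𝓝 a) := by
      simpa using hBT.const_mul a
    have upper : Tendsto (fun i ↦ 1 - b * (B i / T i)) l (𝓝 a) := by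
      convert (hBT.const_mul b).const_sub 1 using 2
      linarith
    refine tendsto_of_tendsto_of_tendsto_of_le_of_le' lower upper ?_ ?_
    · filter_upwards [hT, hx] with i hTi hxi
      rw [← mul_div_assoc]
      exact div_le_div_of_nonneg_right hxi hTi.le
    · filter_upwards [hT, hxy, hy] with i hTi hxyi hyi
      rw [← mul_div_assoc, le_sub_iff_add_le, ← add_div, div_le_one hTi]
      linarith
  refine ((hfrac hab hxy hx hy).div (hfrac ((add_comm b a).trans hab)
    (by simpa only [add_comm] using hxy) hy hx) hb).congr' ?_
  filter_upwards [hT] with i hTi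
  exact div_div_div_cancel_right₀ hTi.ne' _ _

theorem pred_div_mul_le_of_mul_le {n b x : ℕ} (hn : 1 ≤ n) (h : (n - 1) * b ≤ n * x) :
    ((n : ℝ) - 1) / n * b ≤ x := by
  rw [div_mul_eq_mul_div, div_le_iff₀ (by positivity), ← Nat.cast_pred hn]
  exact_mod_cast h.trans_eq (mul_comm _ _)

theorem tendsto_div_of_choose_le {n : ℕ} (hn : 1 ≤ n) {x y : ℕ → ℕ}
    (hxy : ∀ D, x D + y D = (D + n - 1).choose (n - 1))
    (hx : ∀ᶠ D in atTop, (n - 1) * (D - n).choose (n - 1) ≤ n * x D)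
    (hy : ∀ᶠ D in atTop, (D - n).choose (n - 1) ≤ n * y D) :
    Tendsto (fun D ↦ (x D : ℝ) / y D) atTop (𝓝 ((n : ℝ) - 1)) := by
  have hnR : (0 : ℝ) < n := by exact_mod_cast hn
  have hlim := tendsto_div_of_add_eq (x := fun D ↦ (x D : ℝ)) (y := fun D ↦ (y D : ℝ))
    (T := fun D ↦ ((D + (n - 1)).choose (n - 1) : ℝ)) (a := ((n : ℝ) - 1) / n) (b := 1 / n)
    (by field_simp; ring) (by positivity)
    (Eventually.of_forall fun D ↦ by exact_mod_cast Nat.choose_pos (by omega))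
    (Eventually.of_forall fun D ↦ by rw [← Nat.add_sub_assoc hn]; exact_mod_cast hxy D)
    (hx.mono fun _ ↦ pred_div_mul_le_of_mul_le hn)
    (hy.mono fun D hD ↦ by
      rw [div_mul_eq_mul_div, one_mul, div_le_iff₀ hnR]
      exact_mod_cast hD.trans_eq (mul_comm _ _))
    (tendsto_choose_sub_div_choose_add n (n - 1) (n - 1))
  convert hlim using 2
  field_simp

noncomputable def balancingShift {σ : Type*} [Finite σ] [DecidableEq σ] (i₀ i₁ : σ) (m j : ℕ) :
    σ →₀ ℕ :=
  equivFunOnFinite.symm 1 + single i₀ j + single i₁ (m - 1 - j)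

section BalancingShift

variable {σ : Type*} [Fintype σ] [DecidableEq σ] (i₀ i₁ : σ) {m j : ℕ}

theorem degree_balancingShift (hj : j < m) :
    (balancingShift i₀ i₁ m j).degree = Fintype.card σ + m - 1 := by
  rw [balancingShift, map_add, map_add, degree_single, degree_single, degree_eq_sum]
  simp only [coe_equivFunOnFinite_symm, Pi.one_apply, sum_const, card_univ, smul_eq_mul, mul_one]
  omega

theorem one_le_add_balancingShift (β : σ →₀ ℕ) (i : σ) : 1 ≤ (β + balancingShift i₀ i₁ m j) i := by
  simp only [balancingShift, Finsupp.coe_add, Pi.add_apply, coe_equivFunOnFinite_symm, Pi.one_apply]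
  omega

theorem weight_balancingShift {w : σ → ℕ} (h₀ : w i₀ = 1) (h₁ : w i₁ = 0) :
    weight w (balancingShift i₀ i₁ m j) = weight w (equivFunOnFinite.symm (1 : σ → ℕ)) + j := by
  rw [balancingShift, map_add, map_add, weight_single, weight_single, h₀, h₁]
  simp

end BalancingShift

-- The weights `k` of the paper's `Σ_{k=1}^{n-1} k α_k`, with the variables indexed from `0`.
def residueWeight (n : ℕ) (k : Fin n) : ℕ := if (k : ℕ) < n - 1 then k + 1 else 0

def IsBalanced (n D : ℕ) (α : Fin n →₀ ℕ) : Prop :=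
  ((weight (residueWeight n) α : ℤ) - D) % n = 0

noncomputable instance (n D : ℕ) : DecidablePred (IsBalanced n D) :=
  fun _ ↦ inferInstanceAs (Decidable (_ = _))

theorem isBalanced_iff {n D : ℕ} {α : Fin n →₀ ℕ} : IsBalanced n D α ↔
    (((∑ k : Fin n, (if (k : ℕ) < n - 1 then (k : ℕ) + 1 else 0) * α k : ℕ) : ℤ) - D) % n = 0 := by
  simp only [IsBalanced, weight_eq_sum, residueWeight, smul_eq_mul, mul_comm]

theorem card_filter_isBalanced_add_balancingShift {n : ℕ} (hn : 2 ≤ n) (D : ℕ) (β : Fin n →₀ ℕ) :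
    #{j : Fin n | IsBalanced n D (β + balancingShift ⟨0, by omega⟩ ⟨n - 1, by omega⟩ n j)} = 1 := by
  have h₀ : residueWeight n ⟨0, by omega⟩ = 1 := by
    rw [residueWeight, if_pos (by simp only; omega)]
  have h₁ : residueWeight n ⟨n - 1, by omega⟩ = 0 := by simp [residueWeight]
  refine Eq.trans ?_ (Int.card_filter_emod_add_eq_zero (n := n) (by omega)
    (weight (residueWeight n) β +
      weight (residueWeight n) (equivFunOnFinite.symm (1 : Fin n → ℕ)) - D))
  congr 1
  ext j
  simp only [mem_filter, mem_univ, true_and, IsBalanced, map_add, weight_balancingShift _ _ h₀ h₁,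
    Nat.cast_add]
  ring_nf

theorem mul_choose_le_mul_card {n D : ℕ} (hD : 2 * n - 1 ≤ D) (i₀ i₁ : Fin n)
    (P : (Fin n →₀ ℕ) → Prop) [DecidablePred P] (k : ℕ)
    (hk : ∀ β, k ≤ #{j : Fin n | P (β + balancingShift i₀ i₁ n j)}) (S : Finset (Fin n →₀ ℕ))
    (hS : ∀ α : Fin n →₀ ℕ, α.degree = D → (∀ i, 1 ≤ α i) → P α → α ∈ S) :
    k * (D - n).choose (n - 1) ≤ n * #S := by
  have hn : 1 ≤ n := i₀.pos
  have hB := card_finsuppAntidiag_univ_fin hn (D - (2 * n - 1))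
  rw [show D - (2 * n - 1) + (n - 1) = D - n by omega] at hB
  rw [← hB]
  simpa using mul_card_le_card_mul_card_of_injOn _ S
    (fun (j : Fin n) β ↦ P (β + balancingShift i₀ i₁ n j))
    (fun (j : Fin n) β ↦ β + balancingShift i₀ i₁ n j) k (fun β _ ↦ hk β)
    (fun j β hβ hP ↦ hS _ (by
      rw [map_add, mem_finsuppAntidiag_univ.mp hβ, degree_balancingShift _ _ j.isLt]
      simp only [Fintype.card_fin]
      omega) (one_le_add_balancingShift _ _ _) hP)
    (fun _ ↦ (add_left_injective _).injOn)

theorem mul_choose_le_mul_card_of_not_isBalanced {n D : ℕ} (hn : 2 ≤ n) (hD : 2 * n - 1 ≤ D)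
    (S : Finset (Fin n →₀ ℕ))
    (hS : ∀ α : Fin n →₀ ℕ, α.degree = D → (∀ i, 1 ≤ α i) → ¬ IsBalanced n D α → α ∈ S) :
    (n - 1) * (D - n).choose (n - 1) ≤ n * #S := by
  refine mul_choose_le_mul_card hD ⟨0, by omega⟩ ⟨n - 1, by omega⟩ _ (n - 1) (fun β ↦ ?_) S hS
  have := card_filter_add_card_filter_not (s := univ)
    fun j : Fin n ↦ IsBalanced n D (β + balancingShift ⟨0, by omega⟩ ⟨n - 1, by omega⟩ n j)
  rw [card_filter_isBalanced_add_balancingShift hn, card_univ, Fintype.card_fin] at this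
  omega

theorem choose_le_mul_card_of_isBalanced {n D : ℕ} (hn : 2 ≤ n) (hD : 2 * n - 1 ≤ D)
    (S : Finset (Fin n →₀ ℕ))
    (hS : ∀ α : Fin n →₀ ℕ, α.degree = D → (∀ i, 1 ≤ α i) → IsBalanced n D α → α ∈ S) :
    (D - n).choose (n - 1) ≤ n * #S := by
  simpa using mul_choose_le_mul_card hD ⟨0, by omega⟩ ⟨n - 1, by omega⟩ _ 1
    (fun β ↦ (card_filter_isBalanced_add_balancingShift hn D β).ge) S hS

theorem card_coeff_neg_pos_of_sign_pattern {n : ℕ} (hn : 2 ≤ n)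
    (p : ℕ → MvPolynomial (Fin n) ℝ) (hsupp : ∀ D, (p D).support = univ.finsuppAntidiag D)
    (hneg : ∀ D α, α.degree = D → (∀ k, 1 ≤ α k) → ¬ IsBalanced n D α → (p D).coeff α < 0)
    (hpos : ∀ D α, α.degree = D → (∀ k, 1 ≤ α k) → IsBalanced n D α → 0 < (p D).coeff α) :
    (∀ D : ℕ, 3 * n < D →
      ((n : ℝ) - 1) / n * (D - n).choose (n - 1) ≤ #{m ∈ (p D).support | (p D).coeff m < 0} ∧
      #{m ∈ (p D).support | 0 < (p D).coeff m} =
        (D + n - 1).choose (n - 1) - #{m ∈ (p D).support | (p D).coeff m < 0}) ∧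
    Tendsto (fun D ↦ (#{m ∈ (p D).support | (p D).coeff m < 0} : ℝ) /
      #{m ∈ (p D).support | 0 < (p D).coeff m}) atTop (𝓝 ((n : ℝ) - 1)) := by
  have hcard_neg : ∀ D, 2 * n - 1 ≤ D → (n - 1) * (D - n).choose (n - 1) ≤
      n * #{m ∈ (p D).support | (p D).coeff m < 0} := fun D hD ↦
    mul_choose_le_mul_card_of_not_isBalanced hn hD _ fun α hdeg hα hbal ↦
      have hcoeff := hneg D α hdeg hα hbal
      mem_filter.mpr ⟨MvPolynomial.mem_support_iff.mpr hcoeff.ne, hcoeff⟩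
  have hcard_pos : ∀ D, 2 * n - 1 ≤ D → (D - n).choose (n - 1) ≤
      n * #{m ∈ (p D).support | 0 < (p D).coeff m} := fun D hD ↦
    choose_le_mul_card_of_isBalanced hn hD _ fun α hdeg hα hbal ↦
      have hcoeff := hpos D α hdeg hα hbal
      mem_filter.mpr ⟨MvPolynomial.mem_support_iff.mpr hcoeff.ne', hcoeff⟩
  have hsplit : ∀ D, #{m ∈ (p D).support | (p D).coeff m < 0} +
      #{m ∈ (p D).support | 0 < (p D).coeff m} = (D + n - 1).choose (n - 1) := fun D ↦ by
    rw [card_filter_coeff_neg_add_card_filter_coeff_pos, hsupp,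
      card_finsuppAntidiag_univ_fin (by omega), Nat.add_sub_assoc (by omega)]
  refine ⟨fun D hD ↦ ⟨pred_div_mul_le_of_mul_le (by omega) (hcard_neg D (by omega)), by
    have := hsplit D; omega⟩, ?_⟩
  exact tendsto_div_of_choose_le (by omega) hsplit ((eventually_ge_atTop _).mono hcard_neg)
    ((eventually_ge_atTop _).mono hcard_pos)

theorem stmt7 (n : ℕ) (hn : 2 ≤ n) (γ : ℕ → (Fin n →₀ ℕ) → ℝ)
    (hγ0 : ∀ (D : ℕ) (α : Fin n →₀ ℕ), (∃ k, α k = 0) → γ D α = (n : ℝ) - 1)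
    (hγ1 : ∀ (D : ℕ) (α : Fin n →₀ ℕ), (∀ k, 1 ≤ α k) →
      (((∑ k : Fin n, (if (k : ℕ) < n - 1 then (k : ℕ) + 1 else 0) * α k : ℕ) : ℤ) - (D : ℤ)) % (n : ℤ) = 0 →
      γ D α = (n : ℝ) - 1)
    (hγ2 : ∀ (D : ℕ) (α : Fin n →₀ ℕ), (∀ k, 1 ≤ α k) →
      ¬ ((((∑ k : Fin n, (if (k : ℕ) < n - 1 then (k : ℕ) + 1 else 0) * α k : ℕ) : ℤ) - (D : ℤ)) % (n : ℤ) = 0) →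
      γ D α = -1)
    (p : ℕ → MvPolynomial (Fin n) ℝ)
    (hp : ∀ (D : ℕ) (α : Fin n →₀ ℕ),
      (p D).coeff α = if (α.sum fun _ e => e) = D then γ D α else 0) :
    (∀ D : ℕ, 3 * n < D →
      ((n : ℝ) - 1) / n * (Nat.choose (D - n) (n - 1)) ≤
        (((p D).support.filter fun m => (p D).coeff m < 0).card : ℝ) ∧
      ((p D).support.filter fun m => 0 < (p D).coeff m).card =
        Nat.choose (D + n - 1) (n - 1) -
          ((p D).support.filter fun m => (p D).coeff m < 0).card) ∧
    Tendsto (fun D : ℕ =>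
        (((p D).support.filter fun m => (p D).coeff m < 0).card : ℝ) /
          (((p D).support.filter fun m => 0 < (p D).coeff m).card : ℝ))
      atTop (nhds ((n : ℝ) - 1)) := by
  replace hp : ∀ D α, (p D).coeff α = if α.degree = D then γ D α else 0 := hp
  have hnR : (2 : ℝ) ≤ n := by exact_mod_cast hn
  have hγ_ne : ∀ D α, γ D α ≠ 0 := by
    intro D α
    by_cases hzero : ∃ k, α k = 0
    · rw [hγ0 D α hzero]; linarith
    have hα : ∀ k, 1 ≤ α k := fun k ↦ Nat.one_le_iff_ne_zero.mpr (not_exists.mp hzero k)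
    by_cases hbal : IsBalanced n D α
    · rw [hγ1 D α hα (isBalanced_iff.mp hbal)]; linarith
    · rw [hγ2 D α hα (isBalanced_iff.not.mp hbal)]; norm_num
  refine card_coeff_neg_pos_of_sign_pattern hn p (fun D ↦ ?_) (fun D α hdeg hα hbal ↦ ?_)
    (fun D α hdeg hα hbal ↦ ?_)
  · ext α
    rw [MvPolynomial.mem_support_iff, hp, mem_finsuppAntidiag_univ]
    split_ifs with hdeg <;> simp [hdeg, hγ_ne]
  · rw [hp, if_pos hdeg, hγ2 D α hα (isBalanced_iff.not.mp hbal)]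
    norm_num
  · rw [hp, if_pos hdeg, hγ1 D α hα (isBalanced_iff.mp hbal)]
    linarith
end

section
/- Let r(z,z̄) be a real polynomial on ℂⁿ, n ≥ 2, d ≥ 1, with signature pair (N₊, N₋), and suppose r(z,z̄)·‖z‖^{2d} is a squared norm. Then N₋/N₊ ≤ C(n−1+d, d) − 1, where C denotes the binomial coefficient. -/
open MvPolynomial

/-- A real-valued function on `ℂⁿ` is a squared norm if it is a finite sum of
squared moduli of holomorphic polynomials. -/
def IsSquaredNorm {n : ℕ} (F : (Fin n → ℂ) → ℝ) : Prop :=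
  ∃ (N : ℕ) (h : Fin N → MvPolynomial (Fin n) ℂ),
    ∀ z : Fin n → ℂ, F z = ∑ j, ‖MvPolynomial.eval z (h j)‖ ^ 2

/-- `r` has signature pair `(Np, Nm)`: it admits a holomorphic decomposition with
`Np` positive and `Nm` negative squares, and these numbers are minimal. -/
def HasSignaturePair {n : ℕ} (r : (Fin n → ℂ) → ℝ) (Np Nm : ℕ) : Prop :=
  (∃ (f : Fin Np → MvPolynomial (Fin n) ℂ) (g : Fin Nm → MvPolynomial (Fin n) ℂ),
    ∀ z : Fin n → ℂ,
      r z = (∑ j, ‖MvPolynomial.eval z (f j)‖ ^ 2) - ∑ j, ‖MvPolynomial.eval z (g j)‖ ^ 2) ∧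
  ∀ (Mp Mm : ℕ) (f : Fin Mp → MvPolynomial (Fin n) ℂ) (g : Fin Mm → MvPolynomial (Fin n) ℂ),
    (∀ z : Fin n → ℂ,
      r z = (∑ j, ‖MvPolynomial.eval z (f j)‖ ^ 2) - ∑ j, ‖MvPolynomial.eval z (g j)‖ ^ 2) →
    Np ≤ Mp ∧ Nm ≤ Mm

/-!
Take a minimal decomposition `r = Σ|f_i|² - Σ|g_j|²`. Diagonalizing the Hermitian matrix of `r` in
a basis of `span {f_i, g_j}` produces a decomposition with at most `dim span` squares, so by
minimality the `f_i, g_j` are linearly independent. Since `‖z‖^{2d} = Σ_v |z^v|²` over words `v`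
of length `d`, the hypothesis reads `Σ|f_i z^v|² = Σ|g_j z^v|² + Σ|h_l|²`; polarizing this
identity of Hermitian forms puts every `g_j z^v` in the span of the `f_i z^w`, whose dimension is
at most `N₊ · C(n-1+d, d)`. That span contains the `N₊ + N₋` independent polynomials
`f_i z^{v₀}, g_j z^{v₀}`.
-/

open Complex Matrix

theorem Matrix.IsHermitian.star_dotProduct_mulVec_eq_sum_eigenvalues {𝕜 n : Type*} [RCLike 𝕜]
    [Fintype n] [DecidableEq n] {A : Matrix n n 𝕜} (hA : A.IsHermitian) (w : n → 𝕜) :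
    star w ⬝ᵥ (A *ᵥ w) = ∑ i, (hA.eigenvalues i : 𝕜) *
      ‖(star (hA.eigenvectorUnitary : Matrix n n 𝕜) *ᵥ w) i‖ ^ 2 := by
  set U : Matrix n n 𝕜 := (hA.eigenvectorUnitary : Matrix n n 𝕜)
  conv_lhs => rw [hA.spectral_theorem, Unitary.conjStarAlgAut_apply]
  have hstar : star w ᵥ* U = star (star U *ᵥ w) := by
    rw [star_mulVec, star_eq_conjTranspose, conjTranspose_conjTranspose]
  rw [← mulVec_mulVec, ← mulVec_mulVec, dotProduct_mulVec, hstar]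
  simp only [dotProduct, mulVec_diagonal, Pi.star_apply, Function.comp_apply]
  refine Finset.sum_congr rfl fun i _ => ?_
  rw [← RCLike.conj_mul, mul_left_comm]
  rfl

namespace MvPolynomial

variable {σ μ : Type*} [Fintype μ]

/-- Substituting `w = x - i y`, `z = x + i y` turns the totally real set of points `(z̄, z)` into
the real points, where a complex polynomial vanishing identically is zero. -/
theorem eq_zero_of_eval_sumElim_star_self {q : MvPolynomial (σ ⊕ σ) ℂ}
    (hq : ∀ z : σ → ℂ, eval (Sum.elim (star z) z) q = 0) : q = 0 := by
  set u : σ ⊕ σ → MvPolynomial (σ ⊕ σ) ℂ :=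
    Sum.elim (fun i => X (.inl i) - I • X (.inr i)) (fun i => X (.inl i) + I • X (.inr i))
  set v : σ ⊕ σ → MvPolynomial (σ ⊕ σ) ℂ :=
    Sum.elim (fun i => (2⁻¹ : ℂ) • (X (.inl i) + X (.inr i)))
      (fun i => (I / 2) • (X (.inl i) - X (.inr i)))
  have hvu : (fun s => bind₁ v (u s)) = X := by
    funext s
    rcases s with i | i <;> simp only [u, v, Sum.elim_inl, Sum.elim_inr, map_add, map_sub,
      map_smul, bind₁_X_right]
    · linear_combination (norm := module)
        (-(2:ℂ)⁻¹ * I_mul_I) • (X (.inl i) - X (.inr i) : MvPolynomial (σ ⊕ σ) ℂ)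
    · linear_combination (norm := module)
        ((2:ℂ)⁻¹ * I_mul_I) • (X (.inl i) - X (.inr i) : MvPolynomial (σ ⊕ σ) ℂ)
  have hreal : bind₁ u q = 0 := by
    refine funext_set (fun _ => Set.range ((↑) : ℝ → ℂ))
      (fun _ => Set.infinite_range_of_injective ofReal_injective) fun x hx => ?_
    choose y hy using fun s => hx s trivial
    have hux : (fun s => eval x (u s)) =
        Sum.elim (star fun i => x (.inl i) + I * x (.inr i))
          fun i => x (.inl i) + I * x (.inr i) := by
      funext s
      rcases s with i | i <;> simp [u, ← hy, Complex.ext_iff]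
    rw [map_zero, eval, eval₂Hom_bind₁]
    exact hux ▸ hq _
  calc q = bind₁ (fun s => bind₁ v (u s)) q := by rw [hvu, bind₁_X_left]; rfl
    _ = 0 := by rw [← bind₁_bind₁, hreal, map_zero]

/-- The polarization `p̄(w) p(z)` of `|p(z)|²`, with `w` in the left and `z` in the right
variables. -/
noncomputable def polarNormSq (p : MvPolynomial σ ℂ) : MvPolynomial (σ ⊕ σ) ℂ :=
  rename Sum.inl (map (starRingEnd ℂ) p) * rename Sum.inr p

theorem eval_polarNormSq (p : MvPolynomial σ ℂ) (z : σ → ℂ) :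
    eval (Sum.elim (star z) z) (polarNormSq p) = (‖eval z p‖ ^ 2 : ℝ) := by
  have hconj : eval₂ (starRingEnd ℂ) (star z) p = starRingEnd ℂ (eval z p) :=
    (eval₂_comp_left (starRingEnd ℂ) (RingHom.id ℂ) z p).symm
  rw [polarNormSq, map_mul, eval_rename, eval_rename, Sum.elim_comp_inl, Sum.elim_comp_inr,
    eval_map, hconj, conj_mul']
  push_cast; rfl

theorem coeff_sumAlgEquiv_polarNormSq (p : MvPolynomial σ ℂ) (α : σ →₀ ℕ) :
    coeff α (sumAlgEquiv ℂ σ σ (polarNormSq p)) = star (coeff α p) • p := by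
  have hl : sumAlgEquiv ℂ σ σ (rename Sum.inl (map (starRingEnd ℂ) p)) =
      map C (map (starRingEnd ℂ) p) :=
    AlgHom.congr_fun (sumAlgEquiv_comp_rename_inl ℂ σ σ) _
  have hr : sumAlgEquiv ℂ σ σ (rename Sum.inr p) = C p :=
    AlgHom.congr_fun (sumAlgEquiv_comp_rename_inr ℂ σ σ) p
  rw [polarNormSq, map_mul, hl, hr, mul_comm, coeff_C_mul, coeff_map, coeff_map, mul_comm, C_mul']
  rfl

theorem span_range_mul_prod_X_le {ι : Type*} (u : ι → MvPolynomial σ ℂ) (d : ℕ) :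
    Submodule.span ℂ (Set.range fun p : ι × (Fin d → σ) => u p.1 * ∏ k, X (p.2 k)) ≤
      Submodule.span ℂ (Set.range fun p : ι × Sym σ d => u p.1 * (p.2.1.map X).prod) := by
  refine Submodule.span_mono (Set.range_subset_iff.2 fun p => ⟨(p.1, ⟨Finset.univ.val.map p.2,
    by simp⟩), ?_⟩)
  simp [Finset.prod_eq_multiset_prod, Function.comp_def]

variable {ι κ : Type*} [Fintype ι] [Fintype κ]

theorem sum_star_coeff_smul_eq_of_sum_norm_sq_eq {a : ι → MvPolynomial σ ℂ}
    {b : κ → MvPolynomial σ ℂ}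
    (h : ∀ z, ∑ i, ‖eval z (a i)‖ ^ 2 = ∑ k, ‖eval z (b k)‖ ^ 2) (α : σ →₀ ℕ) :
    ∑ i, star (coeff α (a i)) • a i = ∑ k, star (coeff α (b k)) • b k := by
  have hpolar : ∑ i, polarNormSq (a i) = ∑ k, polarNormSq (b k) := by
    refine sub_eq_zero.1 (eq_zero_of_eval_sumElim_star_self fun z => ?_)
    simp only [map_sub, map_sum, eval_polarNormSq]
    exact_mod_cast sub_eq_zero.2 (h z)
  simpa only [map_sum, coeff_sum, coeff_sumAlgEquiv_polarNormSq] using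
    congrArg (fun Q => coeff α (sumAlgEquiv ℂ σ σ Q)) hpolar

theorem mem_span_of_sum_norm_sq_eq {a : ι → MvPolynomial σ ℂ} {b : κ → MvPolynomial σ ℂ}
    (h : ∀ z, ∑ i, ‖eval z (a i)‖ ^ 2 = ∑ k, ‖eval z (b k)‖ ^ 2) (k : κ) :
    b k ∈ Submodule.span ℂ (Set.range a) := by
  -- A functional `ℓ` killing the `a i` turns the coefficient identity into `Σ |ℓ (b k)|² = 0`.
  by_contra hk
  obtain ⟨ℓ, hℓk, hℓa⟩ := Submodule.exists_dual_map_eq_bot_of_notMem hk inferInstance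
  have hℓ : ∀ i, ℓ (a i) = 0 := fun i =>
    (Submodule.mem_bot ℂ).1 <| hℓa ▸ Submodule.mem_map_of_mem (Submodule.subset_span ⟨i, rfl⟩)
  have hcomb : ∑ k, star (ℓ (b k)) • b k = 0 := by
    ext α
    have := congrArg ℓ (sum_star_coeff_smul_eq_of_sum_norm_sq_eq h α)
    simp only [map_sum, map_smul, hℓ, smul_eq_mul, mul_zero, Finset.sum_const_zero] at this
    simpa [coeff_sum, star_sum, mul_comm] using (congrArg star this).symm
  have hzero : ∑ k, ‖ℓ (b k)‖ ^ 2 = 0 := by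
    have := congrArg ℓ hcomb
    simp only [map_sum, map_smul, map_zero, smul_eq_mul] at this
    exact_mod_cast (by simpa [conj_mul'] using this : ((∑ k, ‖ℓ (b k)‖ ^ 2 : ℝ) : ℂ) = 0)
  exact hℓk (norm_eq_zero.1 (pow_eq_zero_iff two_ne_zero |>.1
    ((Finset.sum_eq_zero_iff_of_nonneg fun _ _ => by positivity).1 hzero k (Finset.mem_univ k))))

theorem exists_sum_norm_sq_sub_eq_sum_mul_norm_sq (w : μ → ℝ) (φ : μ → MvPolynomial σ ℂ) :
    ∃ (Mp Mm : ℕ) (f : Fin Mp → MvPolynomial σ ℂ) (g : Fin Mm → MvPolynomial σ ℂ),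
      Mp + Mm ≤ Fintype.card μ ∧ ∀ z,
        (∑ j, ‖eval z (f j)‖ ^ 2) - ∑ j, ‖eval z (g j)‖ ^ 2 = ∑ a, w a * ‖eval z (φ a)‖ ^ 2 := by
  classical
  set pos := Finset.univ.filter fun a => 0 < w a
  set neg := Finset.univ.filter fun a => w a < 0
  set F : μ → MvPolynomial σ ℂ := fun a => C (√|w a| : ℂ) * φ a
  have hF : ∀ z a, ‖eval z (F a)‖ ^ 2 = |w a| * ‖eval z (φ a)‖ ^ 2 := fun z a => by
    rw [map_mul, eval_C, norm_mul, mul_pow, norm_real, Real.norm_of_nonneg (Real.sqrt_nonneg _),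
      Real.sq_sqrt (abs_nonneg _)]
  have hreindex : ∀ (s : Finset μ) z, ∑ j, ‖eval z (F (s.equivFin.symm j))‖ ^ 2 =
      ∑ a, if a ∈ s then |w a| * ‖eval z (φ a)‖ ^ 2 else 0 := fun s z => by
    rw [← Finset.sum_filter, Finset.filter_mem_eq_inter, Finset.univ_inter,
      ← Finset.sum_coe_sort s, ← Equiv.sum_comp s.equivFin.symm]
    simp only [hF]
  refine ⟨pos.card, neg.card, fun j => F (pos.equivFin.symm j), fun j => F (neg.equivFin.symm j),
    ?_, fun z => ?_⟩
  · rw [← Finset.card_union_of_disjoint (Finset.disjoint_filter.2 fun a _ h => h.not_gt)]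
    exact Finset.card_le_univ _
  · rw [hreindex, hreindex, ← Finset.sum_sub_distrib]
    refine Finset.sum_congr rfl fun a _ => ?_
    rcases lt_trichotomy (w a) 0 with h | h | h
    · simp [pos, neg, h, h.not_gt, abs_of_neg h]
    · simp [pos, neg, h]
    · simp [pos, neg, h, h.not_gt, abs_of_pos h]

theorem exists_sum_norm_sq_sub_eq_of_mem_span
    (f : ι → MvPolynomial σ ℂ) (g : κ → MvPolynomial σ ℂ) (e : μ → MvPolynomial σ ℂ)
    (hf : ∀ i, f i ∈ Submodule.span ℂ (Set.range e))
    (hg : ∀ j, g j ∈ Submodule.span ℂ (Set.range e)) :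
    ∃ (Mp Mm : ℕ) (f' : Fin Mp → MvPolynomial σ ℂ) (g' : Fin Mm → MvPolynomial σ ℂ),
      Mp + Mm ≤ Fintype.card μ ∧ ∀ z,
        (∑ j, ‖eval z (f' j)‖ ^ 2) - ∑ j, ‖eval z (g' j)‖ ^ 2 =
          (∑ i, ‖eval z (f i)‖ ^ 2) - ∑ j, ‖eval z (g j)‖ ^ 2 := by
  classical
  choose c hc using fun i => (Submodule.mem_span_range_iff_exists_fun ℂ).1 (hf i)
  choose d hd using fun j => (Submodule.mem_span_range_iff_exists_fun ℂ).1 (hg j)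
  set E : (σ → ℂ) → μ → ℂ := fun z s => eval z (e s)
  have heval : ∀ (c : μ → ℂ) z, eval z (∑ s, c s • e s) = c ⬝ᵥ E z := fun c z => by
    simp only [map_sum, smul_eval, dotProduct, E]
  have hsq : ∀ (c : μ → ℂ) z, ((‖eval z (∑ s, c s • e s)‖ ^ 2 : ℝ) : ℂ) =
      star (E z) ⬝ᵥ (vecMulVec (star c) c *ᵥ E z) := fun c z => by
    rw [vecMulVec_mulVec, dotProduct_smul, star_dotProduct_star, heval, op_smul_eq_mul]
    push_cast
    exact (conj_mul' _).symm
  set H : Matrix μ μ ℂ := ∑ i, vecMulVec (star (c i)) (c i) - ∑ j, vecMulVec (star (d j)) (d j)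
  have hH : H.IsHermitian := by
    simp [H, IsHermitian, conjTranspose_sum, conjTranspose_vecMulVec]
  have hr : ∀ z, (((∑ i, ‖eval z (f i)‖ ^ 2) - ∑ j, ‖eval z (g j)‖ ^ 2 : ℝ) : ℂ) =
      star (E z) ⬝ᵥ (H *ᵥ E z) := fun z => by
    simp only [ofReal_sub, ofReal_sum, ← hc, ← hd, hsq, H, sub_mulVec, sum_mulVec, dotProduct_sub,
      dotProduct_sum]
  obtain ⟨Mp, Mm, f', g', hcard, hfg'⟩ := exists_sum_norm_sq_sub_eq_sum_mul_norm_sq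
    hH.eigenvalues fun a => ∑ s, star (hH.eigenvectorUnitary : Matrix μ μ ℂ) a s • e s
  refine ⟨Mp, Mm, f', g', hcard, fun z => ?_⟩
  have hdiag := hH.star_dotProduct_mulVec_eq_sum_eigenvalues (E z)
  rw [← hr z, RCLike.ofReal_eq_complex_ofReal] at hdiag
  rw [hfg']
  simp only [heval]
  exact_mod_cast hdiag.symm

theorem sum_norm_sq_mul_prod_X [Fintype σ] (u : ι → MvPolynomial σ ℂ)
    (d : ℕ) (z : σ → ℂ) :
    ∑ p : ι × (Fin d → σ), ‖eval z (u p.1 * ∏ k, X (p.2 k))‖ ^ 2 =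
      (∑ i, ‖eval z (u i)‖ ^ 2) * (∑ s, ‖z s‖ ^ 2) ^ d := by
  rw [Finset.sum_pow', Fintype.piFinset_univ, Fintype.sum_prod_type, Finset.sum_mul_sum]
  simp only [map_mul, map_prod, eval_X, norm_mul, norm_prod, mul_pow, Finset.prod_pow]

theorem card_add_card_le_card_mul_choose [Fintype σ] [Nonempty σ] {ι κ : Type*} [Fintype ι]
    [Fintype κ] {f : ι → MvPolynomial σ ℂ} {g : κ → MvPolynomial σ ℂ}
    (hfg : LinearIndependent ℂ (Sum.elim f g)) (h : μ → MvPolynomial σ ℂ) (d : ℕ)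
    (hsq : ∀ z, ((∑ i, ‖eval z (f i)‖ ^ 2) - ∑ j, ‖eval z (g j)‖ ^ 2) * (∑ s, ‖z s‖ ^ 2) ^ d =
      ∑ l, ‖eval z (h l)‖ ^ 2) :
    Fintype.card ι + Fintype.card κ ≤ Fintype.card ι * (Fintype.card σ + d - 1).choose d := by
  classical
  set F : ι × (Fin d → σ) → MvPolynomial σ ℂ := fun p => f p.1 * ∏ k, X (p.2 k)
  set G : κ × (Fin d → σ) → MvPolynomial σ ℂ := fun p => g p.1 * ∏ k, X (p.2 k)
  set W := Submodule.span ℂ (Set.range fun p : ι × Sym σ d => f p.1 * (p.2.1.map X).prod)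
  have hGF : ∀ p, G p ∈ Submodule.span ℂ (Set.range F) := by
    refine fun p => mem_span_of_sum_norm_sq_eq (b := Sum.elim G h) (fun z => ?_) (.inl p)
    simp only [Fintype.sum_sum_type, Sum.elim_inl, Sum.elim_inr, F, G, sum_norm_sq_mul_prod_X,
      ← hsq]
    ring
  set v₀ : Fin d → σ := fun _ => Classical.arbitrary σ
  set w : ι ⊕ κ → MvPolynomial σ ℂ := fun k => Sum.elim f g k * ∏ i, X (v₀ i)
  have hw : LinearIndependent ℂ w := by
    refine hfg.map' (LinearMap.mulRight ℂ (∏ i, X (v₀ i))) (LinearMap.ker_eq_bot.2 ?_)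
    exact mul_left_injective₀ (Finset.prod_ne_zero_iff.2 fun k _ => X_ne_zero _)
  have hwW : Submodule.span ℂ (Set.range w) ≤ W := by
    refine (Submodule.span_le.2 (Set.range_subset_iff.2 ?_)).trans (span_range_mul_prod_X_le f d)
    rintro (i | j)
    · exact Submodule.subset_span ⟨(i, v₀), rfl⟩
    · exact hGF (j, v₀)
  have := FiniteDimensional.span_of_finite ℂ (Set.finite_range
    fun p : ι × Sym σ d => f p.1 * (p.2.1.map X).prod)
  calc Fintype.card ι + Fintype.card κ = Module.finrank ℂ (Submodule.span ℂ (Set.range w)) := by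
        rw [finrank_span_eq_card hw, Fintype.card_sum]
    _ ≤ Module.finrank ℂ W := Submodule.finrank_mono hwW
    _ ≤ Fintype.card (ι × Sym σ d) := finrank_range_le_card _
    _ = _ := by rw [Fintype.card_prod, Sym.card_sym_eq_choose]

end MvPolynomial

theorem HasSignaturePair.linearIndependent {n : ℕ} {r : (Fin n → ℂ) → ℝ} {Np Nm : ℕ}
    (hr : HasSignaturePair r Np Nm) {f : Fin Np → MvPolynomial (Fin n) ℂ}
    {g : Fin Nm → MvPolynomial (Fin n) ℂ}
    (hfg : ∀ z, r z = (∑ j, ‖eval z (f j)‖ ^ 2) - ∑ j, ‖eval z (g j)‖ ^ 2) :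
    LinearIndependent ℂ (Sum.elim f g) := by
  set V := Submodule.span ℂ (Set.range (Sum.elim f g))
  have : FiniteDimensional ℂ V := FiniteDimensional.span_of_finite ℂ (Set.finite_range _)
  set e := Module.finBasis ℂ V
  have hmem : ∀ k, Sum.elim f g k ∈
      Submodule.span ℂ (Set.range fun s => (e s : MvPolynomial (Fin n) ℂ)) := fun k => by
    set x : V := ⟨_, Submodule.subset_span ⟨k, rfl⟩⟩
    refine (Submodule.mem_span_range_iff_exists_fun ℂ).2 ⟨e.repr x, ?_⟩
    simpa only [Submodule.coe_sum, Submodule.coe_smul] using congrArg Subtype.val (e.sum_repr x)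
  obtain ⟨Mp, Mm, f', g', hcard, hfg'⟩ :=
    exists_sum_norm_sq_sub_eq_of_mem_span f g _ (fun i => hmem (.inl i)) (fun j => hmem (.inr j))
  obtain ⟨hp, hm⟩ := hr.2 Mp Mm f' g' fun z => (hfg z).trans (hfg' z).symm
  have hV : Module.finrank ℂ V ≤ Np + Nm := by
    have := finrank_range_le_card (R := ℂ) (Sum.elim f g)
    rwa [Fintype.card_sum, Fintype.card_fin, Fintype.card_fin] at this
  rw [Fintype.card_fin] at hcard
  rw [linearIndependent_iff_card_eq_finrank_span, Fintype.card_sum, Fintype.card_fin,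
    Fintype.card_fin]
  change Np + Nm = Module.finrank ℂ V
  omega

theorem stmt15_general (n d : ℕ) (hn : 2 ≤ n) (r : (Fin n → ℂ) → ℝ) (Np Nm : ℕ)
    (hr : HasSignaturePair r Np Nm)
    (h : IsSquaredNorm fun z : Fin n → ℂ => r z * (∑ i, ‖z i‖ ^ 2) ^ d) :
    Nm ≤ (Nat.choose (n - 1 + d) d - 1) * Np := by
  obtain ⟨f, g, hfg⟩ := hr.1
  obtain ⟨N, s, hs⟩ := h
  have : Nonempty (Fin n) := ⟨⟨0, by omega⟩⟩
  have hbound := card_add_card_le_card_mul_choose (hr.linearIndependent hfg) s d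
    fun z => hfg z ▸ hs z
  rw [Fintype.card_fin, Fintype.card_fin, Fintype.card_fin, show n + d - 1 = n - 1 + d by omega]
    at hbound
  rw [Nat.sub_one_mul, mul_comm]
  omega

theorem stmt15 (n d : ℕ) (hn : 2 ≤ n) (hd : 1 ≤ d) (r : (Fin n → ℂ) → ℝ) (Np Nm : ℕ)
    (hr : HasSignaturePair r Np Nm)
    (h : IsSquaredNorm fun z : Fin n → ℂ => r z * (∑ i, ‖z i‖ ^ 2) ^ d) :
    Nm ≤ (Nat.choose (n - 1 + d) d - 1) * Np :=
  stmt15_general n d hn r Np Nm hr h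
end

section
/- Fix d ≥ 1 and let m ∈ ℕ, D = (d+1)m. Define p_D(x,y) = Σ_{j=0}^D γ(j) x^{D−j} y^j where γ(j) = 2^d − 1 if j ≡ 0 (mod d+1) and γ(j) = −1 otherwise. Then p_D(x,y)·(x+y)^d has only nonnegative coefficients, and N₋(p_D)/N₊(p_D) = dD/(D + d + 1), which tends to d as D → ∞. -/
/-!
Write `γ(j) = 2^d [d+1 ∣ j] - 1`. The coefficient of `x^(D+d-k) y^k` in `p_D (x+y)^d` is the
sum of `γ(j) C(d, k-j)` over the window `k-d ≤ j ≤ k` clipped to `[0, D]`. The binomial weights in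
the window add up to at most `2^d`, while the window always contains a multiple of `d+1`, whose
term contributes at least `2^d`. The coefficients of `p_D` itself are `m+1` positive and `dm`
negative ones.
-/

open MvPolynomial Filter Finset

/-- `N₋(P) / N₊(P)`. -/
noncomputable def negPosRatio {σ : Type*} (P : MvPolynomial σ ℝ) : ℝ :=
  #(P.support.filter fun A => P.coeff A < 0) / #(P.support.filter fun A => 0 < P.coeff A)

namespace BinaryForm

noncomputable def expPair (a b : ℕ) : Fin 2 →₀ ℕ := Finsupp.single 0 a + Finsupp.single 1 b

@[simp] lemma expPair_apply_zero (a b : ℕ) : expPair a b 0 = a := by simp [expPair]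

@[simp] lemma expPair_apply_one (a b : ℕ) : expPair a b 1 = b := by simp [expPair]

lemma expPair_eq_iff {a b : ℕ} {A : Fin 2 →₀ ℕ} : expPair a b = A ↔ a = A 0 ∧ b = A 1 := by
  constructor
  · rintro rfl
    simp
  · rintro ⟨rfl, rfl⟩
    ext i
    fin_cases i <;> simp

lemma expPair_le_iff {a b : ℕ} {A : Fin 2 →₀ ℕ} : expPair a b ≤ A ↔ a ≤ A 0 ∧ b ≤ A 1 := by
  simp [Finsupp.le_def, Fin.forall_fin_two]

variable {R : Type*} [CommSemiring R]

lemma C_mul_X_pow_mul_X_pow (c : R) (a b : ℕ) :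
    C c * X 0 ^ a * X 1 ^ b = (monomial (expPair a b) c : MvPolynomial (Fin 2) R) := by
  rw [X_pow_eq_monomial, X_pow_eq_monomial, C_apply, monomial_mul, monomial_mul, expPair,
    mul_one, mul_one, zero_add]

noncomputable def binaryForm (n : ℕ) (f : ℕ → R) : MvPolynomial (Fin 2) R :=
  ∑ j ∈ range (n + 1), C (f j) * X 0 ^ (n - j) * X 1 ^ j

lemma coeff_binaryForm (n : ℕ) (f : ℕ → R) (A : Fin 2 →₀ ℕ) :
    (binaryForm n f).coeff A = if A 0 + A 1 = n then f (A 1) else 0 := by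
  simp only [binaryForm, C_mul_X_pow_mul_X_pow, coeff_sum, coeff_monomial, expPair_eq_iff]
  split_ifs with hA
  · rw [sum_eq_single_of_mem (A 1) (mem_range.2 (by omega)), if_pos ⟨by omega, rfl⟩]
    exact fun j _ hj => if_neg fun h => hj h.2
  · exact sum_eq_zero fun j hj => if_neg fun h => hA (by have := mem_range.1 hj; omega)

lemma coeff_binaryForm_mul (n e : ℕ) (f g : ℕ → R) (A : Fin 2 →₀ ℕ) :
    (binaryForm n f * binaryForm e g).coeff A =
      if A 0 + A 1 = n + e then
        ∑ j ∈ (range (n + 1)).filter (fun j => j ≤ A 1 ∧ A 1 - j ≤ e), f j * g (A 1 - j)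
      else 0 := by
  rw [binaryForm, sum_mul, coeff_sum, sum_filter]
  simp only [C_mul_X_pow_mul_X_pow, coeff_monomial_mul', coeff_binaryForm, expPair_le_iff,
    Finsupp.tsub_apply, expPair_apply_zero, expPair_apply_one, mul_ite, mul_zero, ← ite_and]
  split_ifs with hA
  · exact sum_congr rfl fun j hj => if_congr (by have := mem_range.1 hj; omega) rfl rfl
  · exact sum_eq_zero fun j hj => if_neg (by have := mem_range.1 hj; omega)

lemma add_X_pow_eq_binaryForm (d : ℕ) :
    (X 0 + X 1 : MvPolynomial (Fin 2) R) ^ d = binaryForm d fun i => (d.choose i : R) := by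
  rw [add_comm, add_pow, binaryForm]
  refine sum_congr rfl fun i _ => ?_
  rw [map_natCast]
  ring

lemma card_filter_support_binaryForm (n : ℕ) (f : ℕ → R) (P : R → Prop) [DecidablePred P]
    (hP : ¬ P 0) :
    #((binaryForm n f).support.filter fun A => P ((binaryForm n f).coeff A)) =
      #((range (n + 1)).filter fun j => P (f j)) := by
  symm
  refine card_nbij' (fun j => expPair (n - j) j) (fun A => A 1) ?_ ?_ ?_ ?_
  · intro j hj
    simp only [mem_coe, mem_filter, mem_range] at hj
    have hcoeff : (binaryForm n f).coeff (expPair (n - j) j) = f j := by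
      rw [coeff_binaryForm, expPair_apply_zero, expPair_apply_one, if_pos (by omega)]
    simp only [mem_coe, mem_filter, mem_support_iff, hcoeff]
    exact ⟨fun h => hP (h ▸ hj.2), hj.2⟩
  · intro A hA
    simp only [mem_coe, mem_filter, mem_support_iff, coeff_binaryForm] at hA
    split_ifs at hA with h
    · simp only [mem_coe, mem_filter, mem_range]
      exact ⟨by omega, hA.2⟩
    · exact absurd rfl hA.1
  · intro j _
    simp
  · intro A hA
    simp only [mem_coe, mem_filter, mem_support_iff, coeff_binaryForm] at hA
    split_ifs at hA with h
    · show expPair (n - A 1) (A 1) = A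
      exact expPair_eq_iff.2 ⟨by omega, rfl⟩
    · exact absurd rfl hA.1

end BinaryForm

open BinaryForm

def gammaSeq (d j : ℕ) : ℝ := if j % (d + 1) = 0 then 2 ^ d - 1 else -1

lemma gammaSeq_pos_iff {d : ℕ} (hd : 1 ≤ d) (j : ℕ) : 0 < gammaSeq d j ↔ j % (d + 1) = 0 := by
  have h2d : (1 : ℝ) < 2 ^ d := one_lt_pow₀ one_lt_two (by omega)
  unfold gammaSeq
  split_ifs with h
  · exact iff_of_true (by linarith) h
  · exact iff_of_false (by norm_num) h

lemma gammaSeq_neg_iff (d j : ℕ) : gammaSeq d j < 0 ↔ ¬ j % (d + 1) = 0 := by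
  have h2d : (1 : ℝ) ≤ 2 ^ d := one_le_pow₀ one_le_two
  unfold gammaSeq
  split_ifs with h
  · exact iff_of_false (by linarith) (not_not.2 h)
  · exact iff_of_true (by norm_num) h

lemma card_filter_mod_eq_zero_range (d m : ℕ) :
    #((range ((d + 1) * m + 1)).filter fun j => j % (d + 1) = 0) = m + 1 := by
  have himage : (range ((d + 1) * m + 1)).filter (fun j => j % (d + 1) = 0) =
      (range (m + 1)).image fun i => (d + 1) * i := by
    ext j
    simp only [mem_filter, mem_range, mem_image]
    constructor
    · rintro ⟨hj, hmod⟩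
      obtain ⟨i, rfl⟩ := Nat.dvd_of_mod_eq_zero hmod
      exact ⟨i, Nat.lt_succ_of_le (Nat.le_of_mul_le_mul_left (by omega) d.add_one_pos), rfl⟩
    · rintro ⟨i, hi, rfl⟩
      have : (d + 1) * i ≤ (d + 1) * m := Nat.mul_le_mul_left _ (by omega)
      exact ⟨by omega, Nat.mul_mod_right _ _⟩
  rw [himage, card_image_of_injective _ fun a b => Nat.eq_of_mul_eq_mul_left d.add_one_pos,
    card_range]

lemma card_filter_gammaSeq_pos {d : ℕ} (hd : 1 ≤ d) (m : ℕ) :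
    #((range ((d + 1) * m + 1)).filter fun j => 0 < gammaSeq d j) = m + 1 := by
  rw [filter_congr fun j _ => gammaSeq_pos_iff hd j, card_filter_mod_eq_zero_range]

lemma card_filter_gammaSeq_neg (d m : ℕ) :
    #((range ((d + 1) * m + 1)).filter fun j => gammaSeq d j < 0) = d * m := by
  have hsplit := card_filter_add_card_filter_not (s := range ((d + 1) * m + 1))
    (fun j => j % (d + 1) = 0)
  rw [card_filter_mod_eq_zero_range, card_range] at hsplit
  rw [filter_congr fun j _ => gammaSeq_neg_iff d j]
  linarith

lemma sum_choose_sub_le_two_pow {d k : ℕ} {s : Finset ℕ} (hs : ∀ j ∈ s, j ≤ k ∧ k - j ≤ d) :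
    ∑ j ∈ s, d.choose (k - j) ≤ 2 ^ d := by
  have hinj : Set.InjOn (fun j => k - j) s := fun x hx y hy hxy => by
    have := hs x hx; have := hs y hy; simp only at hxy; omega
  calc ∑ j ∈ s, d.choose (k - j) = ∑ i ∈ s.image (k - ·), d.choose i := (sum_image hinj).symm
    _ ≤ ∑ i ∈ range (d + 1), d.choose i := by
      refine sum_le_sum_of_subset fun i hi => ?_
      obtain ⟨j, hj, rfl⟩ := mem_image.1 hi
      exact mem_range.2 (by have := hs j hj; omega)
    _ = 2 ^ d := Nat.sum_range_choose d

lemma exists_mul_mem_window (d m k : ℕ) (hk : k ≤ (d + 1) * m + d) :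
    ∃ i ≤ m, (d + 1) * i ≤ k ∧ k - (d + 1) * i ≤ d := by
  refine ⟨min (k / (d + 1)) m, min_le_right _ _, ?_⟩
  have hdiv := Nat.div_add_mod k (d + 1)
  have hmod := Nat.mod_lt k d.add_one_pos
  rcases le_total (k / (d + 1)) m with h | h
  · rw [min_eq_left h]
    omega
  · rw [min_eq_right h]
    have : (d + 1) * m ≤ (d + 1) * (k / (d + 1)) := Nat.mul_le_mul_left _ h
    omega

lemma sum_window_gammaSeq_mul_choose_nonneg (d m k : ℕ) (hk : k ≤ (d + 1) * m + d) :
    0 ≤ ∑ j ∈ (range ((d + 1) * m + 1)).filter (fun j => j ≤ k ∧ k - j ≤ d),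
      gammaSeq d j * (d.choose (k - j) : ℝ) := by
  set T := (range ((d + 1) * m + 1)).filter (fun j => j ≤ k ∧ k - j ≤ d)
  have hsplit : ∀ j, gammaSeq d j * (d.choose (k - j) : ℝ) =
      2 ^ d * (if j % (d + 1) = 0 then (d.choose (k - j) : ℝ) else 0) - d.choose (k - j) := by
    intro j
    unfold gammaSeq
    split_ifs <;> ring
  rw [sum_congr rfl fun j _ => hsplit j, sum_sub_distrib, ← mul_sum, sub_nonneg]
  have hupper : ∑ j ∈ T, (d.choose (k - j) : ℝ) ≤ 2 ^ d := by
    exact_mod_cast sum_choose_sub_le_two_pow fun j hj => (mem_filter.1 hj).2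
  have hlower : 1 ≤ ∑ j ∈ T, if j % (d + 1) = 0 then (d.choose (k - j) : ℝ) else 0 := by
    obtain ⟨i, him, hik, hkd⟩ := exists_mul_mem_window d m k hk
    have hiD : (d + 1) * i ≤ (d + 1) * m := Nat.mul_le_mul_left _ him
    calc (1 : ℝ) ≤ d.choose (k - (d + 1) * i) := by exact_mod_cast Nat.choose_pos hkd
      _ = if (d + 1) * i % (d + 1) = 0 then (d.choose (k - (d + 1) * i) : ℝ) else 0 := by
        rw [if_pos (Nat.mul_mod_right _ _)]
      _ ≤ _ := single_le_sum (f := fun j => if j % (d + 1) = 0 then (d.choose (k - j) : ℝ) else 0)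
        (fun j _ => by positivity) (mem_filter.2 ⟨mem_range.2 (by omega), hik, hkd⟩)
  calc ∑ j ∈ T, (d.choose (k - j) : ℝ) ≤ 2 ^ d * 1 := by rw [mul_one]; exact hupper
    _ ≤ _ := mul_le_mul_of_nonneg_left hlower (by positivity)

lemma coeff_binaryForm_gammaSeq_mul_nonneg (d m : ℕ) (A : Fin 2 →₀ ℕ) :
    0 ≤ (binaryForm ((d + 1) * m) (gammaSeq d) * (X 0 + X 1) ^ d).coeff A := by
  rw [add_X_pow_eq_binaryForm, coeff_binaryForm_mul]
  split_ifs with hA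
  · exact sum_window_gammaSeq_mul_choose_nonneg d m (A 1) (by omega)
  · exact le_rfl

lemma negPosRatio_binaryForm_gammaSeq {d : ℕ} (hd : 1 ≤ d) (m : ℕ) :
    negPosRatio (binaryForm ((d + 1) * m) (gammaSeq d)) = d * (m / (m + 1)) := by
  rw [negPosRatio, card_filter_support_binaryForm _ _ (· < 0) (lt_irrefl (0 : ℝ)),
    card_filter_support_binaryForm _ _ (0 < ·) (lt_irrefl (0 : ℝ)), card_filter_gammaSeq_neg,
    card_filter_gammaSeq_pos hd]
  push_cast
  ring

theorem stmt16 (d : ℕ) (hd : 1 ≤ d) (γ : ℕ → ℝ)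
    (hγ : ∀ j : ℕ, γ j = if j % (d + 1) = 0 then (2 : ℝ) ^ d - 1 else -1)
    (p : ℕ → MvPolynomial (Fin 2) ℝ)
    (hp : ∀ m : ℕ, p m = ∑ j ∈ Finset.range ((d + 1) * m + 1),
      C (γ j) * X 0 ^ ((d + 1) * m - j) * X 1 ^ j) :
    (∀ (m : ℕ) (A : Fin 2 →₀ ℕ), 0 ≤ ((p m) * (X 0 + X 1) ^ d).coeff A) ∧
    (∀ m : ℕ,
      ((((p m).support.filter fun A => (p m).coeff A < 0).card : ℝ) /
          (((p m).support.filter fun A => 0 < (p m).coeff A).card : ℝ)) =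
        (d : ℝ) * ((d + 1) * m) / ((d + 1) * m + d + 1)) ∧
    Tendsto (fun m : ℕ =>
        ((((p m).support.filter fun A => (p m).coeff A < 0).card : ℝ) /
          (((p m).support.filter fun A => 0 < (p m).coeff A).card : ℝ)))
      atTop (nhds (d : ℝ)) := by
  obtain rfl : γ = gammaSeq d := funext hγ
  obtain rfl : p = fun m => binaryForm ((d + 1) * m) (gammaSeq d) := funext hp
  refine ⟨fun m => coeff_binaryForm_gammaSeq_mul_nonneg d m, fun m => ?_, ?_⟩
  · refine (negPosRatio_binaryForm_gammaSeq hd m).trans ?_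
    field_simp
    ring
  · refine Tendsto.congr (fun m => (negPosRatio_binaryForm_gammaSeq hd m).symm) ?_
    simpa using (tendsto_natCast_div_add_atTop (1 : ℝ)).const_mul (d : ℝ)
end

section
/- For each fixed n ≥ 2 and each d ≥ 1, there exists a real polynomial p in n variables such that p·(x₁+⋯+xₙ)^d has only nonnegative coefficients and N₋(p)/N₊(p) ≥ d^{n−1}/2^{n(n−1)/2}. -/
/-!
Write `n = m + 1` and fix block sizes `s : Fin m → ℕ` with `∑ (sᵢ - 1) ≤ d`. Put the coefficient
`n ^ d` on the block corners (multiples of `s`) of the box `∏ [0, sᵢ (U + d))`, the coefficient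
`-1` on the remaining points of the smaller box `∏ [0, sᵢ U)`, and homogenize with the last
variable. If `x ^ w` is negative and `x ^ b` is a monomial of `(∑ xᵢ) ^ d`, rounding `w + b` down
to a block corner `v` costs at most `∑ (sᵢ - 1) ≤ d` in degree, so `x ^ v` times some monomial of
`(∑ xᵢ) ^ d` also lands on `x ^ (w + b)` and contributes at least `n ^ d`. The negative terms
subtract at most the sum of all coefficients of `(∑ xᵢ) ^ d`, which is `n ^ d`.
Counting gives `N₊ = (U + d) ^ m` and `N₋ = (∏ sᵢ - 1) U ^ m`. With `U = d ^ 2` the ratio is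
`(∏ sᵢ - 1) (d / (d + 1)) ^ m`, and balanced sizes with `m sᵢ ≥ d + 1` make it at least
`d ^ m / (2 m ^ m) ≥ d ^ m / 2 ^ (m (m + 1) / 2)`.
-/

open MvPolynomial Finset

namespace MvPolynomial

variable {σ R : Type*}

section CommRing

variable [CommRing R]

theorem degree_eq_of_coeff_sum_X_pow_ne_zero [Fintype σ] {d : ℕ} {e : σ →₀ ℕ}
    (he : ((∑ i, X i : MvPolynomial σ R) ^ d).coeff e ≠ 0) : e.degree = d := by
  rw [coeff_sum_X_pow_of_fintype] at he
  exact of_not_not fun h => he (by rw [if_neg (by exact h), Nat.cast_zero])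

variable [DecidableEq σ]

noncomputable def signedSum (P N : Finset (σ →₀ ℕ)) (V : R) : MvPolynomial σ R :=
  ∑ a ∈ P, monomial a V - ∑ a ∈ N, monomial a 1

theorem coeff_signedSum {P N : Finset (σ →₀ ℕ)} (V : R) (hPN : Disjoint P N) (a : σ →₀ ℕ) :
    (signedSum P N V).coeff a = if a ∈ P then V else if a ∈ N then -1 else 0 := by
  simp only [signedSum, coeff_sub, coeff_sum, coeff_monomial, sum_ite_eq']
  by_cases haP : a ∈ P
  · simp [haP, disjoint_left.1 hPN haP]
  · by_cases haN : a ∈ N <;> simp [haP, haN]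

end CommRing

variable [CommRing R] [LinearOrder R] [IsStrictOrderedRing R]

section SignedSum

variable [DecidableEq σ] {P N : Finset (σ →₀ ℕ)} {V : R}

theorem neg_one_le_coeff_signedSum (hPN : Disjoint P N) (hV : 0 ≤ V) (a : σ →₀ ℕ) :
    -1 ≤ (signedSum P N V).coeff a := by
  rw [coeff_signedSum V hPN]
  split_ifs <;> linarith

theorem filter_support_signedSum_pos (hPN : Disjoint P N) (hV : 0 < V) :
    (signedSum P N V).support.filter (fun a => 0 < (signedSum P N V).coeff a) = P := by
  ext a
  rw [mem_filter, mem_support_iff, coeff_signedSum V hPN]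
  split_ifs with haP haN <;> simp [haP, hV.ne', hV]

theorem filter_support_signedSum_neg (hPN : Disjoint P N) (hV : 0 < V) :
    (signedSum P N V).support.filter (fun a => (signedSum P N V).coeff a < 0) = N := by
  ext a
  rw [mem_filter, mem_support_iff, coeff_signedSum V hPN]
  split_ifs with haP haN
  · simp [hV.not_gt, disjoint_left.1 hPN haP]
  · simp [haN]
  · simp [haN]

end SignedSum

section SumXPow

variable [Fintype σ]

theorem coeff_sum_X_pow_nonneg (d : ℕ) (e : σ →₀ ℕ) :
    0 ≤ ((∑ i, X i : MvPolynomial σ R) ^ d).coeff e := by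
  rw [coeff_sum_X_pow_of_fintype]
  split_ifs <;> positivity

theorem one_le_coeff_sum_X_pow {d : ℕ} {e : σ →₀ ℕ} (he : e.degree = d) :
    1 ≤ ((∑ i, X i : MvPolynomial σ R) ^ d).coeff e := by
  rw [coeff_sum_X_pow_of_fintype, if_pos (by exact he), Nat.one_le_cast]
  exact Nat.multinomial_pos _ _

end SumXPow

theorem sum_antidiagonal_coeff_le_eval_one [DecidableEq σ] (f : MvPolynomial σ R)
    (hf : ∀ e, 0 ≤ f.coeff e) (μ : σ →₀ ℕ) :
    ∑ x ∈ antidiagonal μ, f.coeff x.2 ≤ eval (fun _ => 1) f := by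
  have hinj : Set.InjOn Prod.snd (antidiagonal μ : Set ((σ →₀ ℕ) × (σ →₀ ℕ))) := by
    intro x hx y hy hxy
    rw [mem_coe, HasAntidiagonal.mem_antidiagonal] at hx hy
    exact Prod.ext (add_right_cancel (hx.trans (hy.symm.trans (by rw [hxy])))) hxy
  rw [← sum_image (f := fun e => f.coeff e) hinj, eval_eq, ← sum_filter_ne_zero]
  simp only [one_pow, prod_const_one, mul_one]
  exact sum_le_sum_of_subset_of_nonneg (fun e he => mem_support_iff.2 (mem_filter.1 he).2)
    fun e _ _ => hf e

theorem coeff_mul_sum_X_pow_nonneg [Fintype σ] {d : ℕ} (q : MvPolynomial σ R)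
    (hq : ∀ a, -1 ≤ q.coeff a)
    (hcover : ∀ a b : σ →₀ ℕ, q.coeff a < 0 → b.degree = d →
      ∃ c e, c + e = a + b ∧ e.degree = d ∧ (Fintype.card σ : R) ^ d ≤ q.coeff c)
    (μ : σ →₀ ℕ) : 0 ≤ (q * (∑ i, X i) ^ d).coeff μ := by
  classical
  set ℓ : MvPolynomial σ R := (∑ i, X i) ^ d
  rw [coeff_mul]
  by_cases hall : ∀ x ∈ antidiagonal μ, 0 ≤ q.coeff x.1 * ℓ.coeff x.2
  · exact sum_nonneg hall
  push Not at hall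
  obtain ⟨⟨a, b⟩, hab, hneg⟩ := hall
  have hℓb : 0 < ℓ.coeff b := (coeff_sum_X_pow_nonneg d b).lt_of_ne fun h : 0 = ℓ.coeff b => by
    rw [← h, mul_zero] at hneg
    exact hneg.false
  obtain ⟨c, e, hce, he, hc⟩ := hcover a b (neg_of_mul_neg_left hneg hℓb.le)
    (degree_eq_of_coeff_sum_X_pow_ne_zero hℓb.ne')
  have hmem : (c, e) ∈ antidiagonal μ := by
    rw [HasAntidiagonal.mem_antidiagonal] at hab ⊢
    exact hce.trans hab
  have hpaid : (Fintype.card σ : R) ^ d ≤ q.coeff c * ℓ.coeff e :=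
    hc.trans <| le_mul_of_one_le_right ((pow_nonneg (Nat.cast_nonneg _) d).trans hc)
      (one_le_coeff_sum_X_pow he)
  have hrest : -(Fintype.card σ : R) ^ d ≤
      ∑ x ∈ (antidiagonal μ).erase (c, e), q.coeff x.1 * ℓ.coeff x.2 :=
    calc -(Fintype.card σ : R) ^ d ≤ -∑ x ∈ antidiagonal μ, ℓ.coeff x.2 := by
          simpa [ℓ] using sum_antidiagonal_coeff_le_eval_one ℓ (coeff_sum_X_pow_nonneg d) μ
      _ ≤ -∑ x ∈ (antidiagonal μ).erase (c, e), ℓ.coeff x.2 :=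
          neg_le_neg (sum_le_sum_of_subset_of_nonneg (erase_subset _ _)
            fun x _ _ => coeff_sum_X_pow_nonneg d x.2)
      _ ≤ _ := by
          rw [← sum_neg_distrib]
          exact sum_le_sum fun x _ => by
            simpa using mul_le_mul_of_nonneg_right (hq x.1) (coeff_sum_X_pow_nonneg d x.2)
  rw [← add_sum_erase _ _ hmem]
  linarith

end MvPolynomial

theorem Nat.sq_le_two_pow_of_four_le {m : ℕ} (hm : 4 ≤ m) : m ^ 2 ≤ 2 ^ m := by
  induction m, hm using Nat.le_induction with
  | base => norm_num
  | succ k hk ih =>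
    calc (k + 1) ^ 2 ≤ 2 * k ^ 2 := by nlinarith
      _ ≤ 2 * 2 ^ k := by omega
      _ = 2 ^ (k + 1) := by ring

theorem Nat.two_mul_pow_self_le {m : ℕ} (hm : 1 ≤ m) : 2 * m ^ m ≤ 2 ^ ((m + 1) * m / 2) := by
  rcases Nat.lt_or_ge m 4 with h | h
  · interval_cases m <;> norm_num
  have heven : 2 ∣ (m + 1) * m := by
    rw [mul_comm]
    exact (Nat.even_mul_succ_self m).two_dvd
  rw [← Nat.pow_le_pow_iff_left two_ne_zero, ← pow_mul, Nat.div_mul_cancel heven]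
  calc (2 * m ^ m) ^ 2 = 4 * (m ^ 2) ^ m := by ring
    _ ≤ 2 ^ m * (2 ^ m) ^ m :=
        Nat.mul_le_mul (by simpa using Nat.pow_le_pow_right two_pos (by omega : 2 ≤ m))
          (Nat.pow_le_pow_left (Nat.sq_le_two_pow_of_four_le h) m)
    _ = 2 ^ ((m + 1) * m) := by ring

theorem Nat.exists_blockSizes {m d : ℕ} (hm : 0 < m) (hd : 0 < d) :
    ∃ s : Fin m → ℕ, (∀ i, 0 < s i) ∧ ∑ i, (s i - 1) ≤ d ∧ (∀ i, d + 1 ≤ m * s i) ∧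
      2 ≤ ∏ i, s i := by
  set i₀ : Fin m := ⟨0, hm⟩
  set s : Fin m → ℕ := fun i => d / m + (if i = i₀ then d % m else 0) + 1
  have hdiv := Nat.div_add_mod d m
  have hmod := Nat.mod_lt d hm
  refine ⟨s, fun i => Nat.succ_pos _, ?_, fun i => ?_, ?_⟩
  · simp [s, sum_add_distrib, hdiv]
  · calc d + 1 ≤ m * (d / m + 1) := by rw [mul_add, mul_one]; omega
      _ ≤ m * s i := Nat.mul_le_mul_left _ (by simp [s])
  · calc 2 ≤ s i₀ := by
          suffices d / m + d % m ≠ 0 by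
            simpa only [s, ↓reduceIte] using Nat.succ_le_succ (Nat.pos_of_ne_zero this)
          intro h
          rw [Nat.eq_zero_of_add_eq_zero_right h, Nat.eq_zero_of_add_eq_zero_left h] at hdiv
          omega
      _ ≤ ∏ i, s i := single_le_prod' (fun i _ => Nat.succ_pos _) (mem_univ i₀)

theorem Nat.succ_pow_le_two_pow_mul_prod_sub_one {m d : ℕ} (hm : 1 ≤ m) {s : Fin m → ℕ}
    (hs : ∀ i, d + 1 ≤ m * s i) (hprod : 2 ≤ ∏ i, s i) :
    (d + 1) ^ m ≤ 2 ^ ((m + 1) * m / 2) * (∏ i, s i - 1) :=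
  calc (d + 1) ^ m = ∏ _ : Fin m, (d + 1) := by simp
    _ ≤ ∏ i, m * s i := prod_le_prod' fun i _ => hs i
    _ = m ^ m * ∏ i, s i := by simp [prod_mul_distrib]
    _ ≤ m ^ m * (2 * (∏ i, s i - 1)) := Nat.mul_le_mul_left _ (by omega)
    _ = 2 * m ^ m * (∏ i, s i - 1) := by ring
    _ ≤ 2 ^ ((m + 1) * m / 2) * (∏ i, s i - 1) :=
        Nat.mul_le_mul_right _ (Nat.two_mul_pow_self_le hm)

section Lattice

variable {m : ℕ}

noncomputable def homogenize (D : ℕ) (v : Fin m → ℕ) : Fin (m + 1) →₀ ℕ :=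
  Finsupp.equivFunOnFinite.symm (Fin.snoc v (D - ∑ i, v i))

@[simp]
theorem homogenize_castSucc (D : ℕ) (v : Fin m → ℕ) (i : Fin m) :
    homogenize D v i.castSucc = v i := by
  simp [homogenize]

@[simp]
theorem homogenize_last (D : ℕ) (v : Fin m → ℕ) :
    homogenize D v (Fin.last m) = D - ∑ i, v i := by
  simp [homogenize]

theorem homogenize_injective (D : ℕ) : Function.Injective (homogenize (m := m) D) :=
  fun v w h => funext fun i => by simpa using DFunLike.congr_fun h i.castSucc

theorem degree_homogenize {D : ℕ} {v : Fin m → ℕ} (hv : ∑ i, v i ≤ D) :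
    (homogenize D v).degree = D := by
  rw [Finsupp.degree_eq_sum, Fin.sum_univ_castSucc]
  simp only [homogenize_castSucc, homogenize_last]
  omega

theorem homogenize_le_add {D : ℕ} {v w : Fin m → ℕ} {b : Fin (m + 1) →₀ ℕ}
    (hvw : ∀ i, v i ≤ w i + b i.castSucc) (hsum : ∑ i, w i ≤ ∑ i, v i + b (Fin.last m))
    (hv : ∑ i, v i ≤ D) (hw : ∑ i, w i ≤ D) :
    homogenize D v ≤ homogenize D w + b := by
  intro j
  induction j using Fin.lastCases with
  | last => simp only [Finsupp.add_apply, homogenize_last]; omega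
  | cast i => simpa using hvw i

variable (s : Fin m → ℕ) (K : ℕ)

def blockBox : Finset (Fin m → ℕ) :=
  Fintype.piFinset fun i => range (s i * K)

def blockCorners : Finset (Fin m → ℕ) :=
  (Fintype.piFinset fun _ => range K).image fun k i => s i * k i

theorem card_blockBox : #(blockBox s K) = (∏ i, s i) * K ^ m := by
  simp [blockBox, prod_mul_distrib]

variable {s K}

theorem sum_le_of_mem_blockBox {v : Fin m → ℕ} (hv : v ∈ blockBox s K) : ∑ i, v i ≤ ∑ i, s i * K :=
  sum_le_sum fun i _ => (mem_range.1 (Fintype.mem_piFinset.1 hv i)).le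

theorem blockBox_mono {K' : ℕ} (h : K ≤ K') : blockBox s K ⊆ blockBox s K' :=
  Fintype.piFinset_subset _ _ fun _ => range_subset_range.2 (Nat.mul_le_mul_left _ h)

variable (hs : ∀ i, 0 < s i)
include hs

theorem card_blockCorners : #(blockCorners s K) = K ^ m := by
  rw [blockCorners, card_image_of_injective]
  · simp
  · intro k l h
    funext i
    exact Nat.eq_of_mul_eq_mul_left (hs i) (congrFun h i)

theorem mem_blockCorners {v : Fin m → ℕ} :
    v ∈ blockCorners s K ↔ ∀ i, s i ∣ v i ∧ v i < s i * K := by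
  simp only [blockCorners, mem_image, Fintype.mem_piFinset, mem_range]
  constructor
  · rintro ⟨k, hk, rfl⟩ i
    exact ⟨dvd_mul_right _ _, Nat.mul_lt_mul_of_pos_left (hk i) (hs i)⟩
  · intro h
    refine ⟨fun i => v i / s i, fun i => ?_, funext fun i => Nat.mul_div_cancel' (h i).1⟩
    exact Nat.div_lt_of_lt_mul (h i).2

theorem blockCorners_subset_blockBox : blockCorners s K ⊆ blockBox s K := fun _ hv =>
  Fintype.mem_piFinset.2 fun i => mem_range.2 ((mem_blockCorners hs).1 hv i).2

theorem disjoint_blockCorners_blockBox_sdiff (K' : ℕ) :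
    Disjoint (blockCorners s K') (blockBox s K \ blockCorners s K) := by
  rw [disjoint_left]
  intro v hv' hv
  rw [mem_sdiff, mem_blockCorners hs] at hv
  rw [mem_blockCorners hs] at hv'
  exact hv.2 fun i => ⟨(hv' i).1, mem_range.1 (Fintype.mem_piFinset.1 hv.1 i)⟩

variable {d : ℕ} (hsd : ∑ i, (s i - 1) ≤ d)
include hsd

theorem exists_blockCorners_homogenize_le {U : ℕ} {w : Fin m → ℕ} (hw : w ∈ blockBox s U)
    {b : Fin (m + 1) →₀ ℕ} (hb : b.degree = d) :
    ∃ v ∈ blockCorners s (U + d),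
      homogenize (∑ i, s i * (U + d)) v ≤ homogenize (∑ i, s i * (U + d)) w + b := by
  set x : Fin m → ℕ := fun i => w i + b i.castSucc
  set v : Fin m → ℕ := fun i => s i * (x i / s i)
  have hv : v ∈ blockCorners s (U + d) := by
    refine (mem_blockCorners hs).2 fun i => ⟨dvd_mul_right _ _, ?_⟩
    have hwi := mem_range.1 (Fintype.mem_piFinset.1 hw i)
    have hbi := b.le_degree i.castSucc
    calc v i ≤ w i + b i.castSucc := Nat.mul_div_le _ _
      _ < s i * U + d := by omega
      _ ≤ s i * (U + d) := by nlinarith [hs i]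
  refine ⟨v, hv, homogenize_le_add (fun i => Nat.mul_div_le _ _) ?_
    (sum_le_of_mem_blockBox (blockCorners_subset_blockBox hs hv))
    (sum_le_of_mem_blockBox (blockBox_mono (Nat.le_add_right _ _) hw))⟩
  have hmod : ∑ i, x i % s i ≤ d :=
    (sum_le_sum fun i _ => Nat.le_sub_one_of_lt (Nat.mod_lt _ (hs i))).trans hsd
  have hx : ∑ i, v i + ∑ i, x i % s i = ∑ i, w i + ∑ i : Fin m, b i.castSucc := by
    rw [← sum_add_distrib, ← sum_add_distrib]
    exact sum_congr rfl fun i _ => Nat.div_add_mod _ _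
  have hb' : ∑ i : Fin m, b i.castSucc + b (Fin.last m) = d := by
    rw [← hb, Finsupp.degree_eq_sum, Fin.sum_univ_castSucc]
  omega

theorem exists_coeff_mul_sum_X_pow_nonneg_card (U : ℕ) :
    ∃ p : MvPolynomial (Fin (m + 1)) ℝ, (∀ μ, 0 ≤ (p * (∑ i, X i) ^ d).coeff μ) ∧
      #(p.support.filter fun a => 0 < p.coeff a) = (U + d) ^ m ∧
      #(p.support.filter fun a => p.coeff a < 0) = (∏ i, s i - 1) * U ^ m := by
  set D := ∑ i, s i * (U + d)
  set P := (blockCorners s (U + d)).image (homogenize D)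
  set N := (blockBox s U \ blockCorners s U).image (homogenize D)
  have hPN : Disjoint P N := (disjoint_image (homogenize_injective D)).2
    (disjoint_blockCorners_blockBox_sdiff hs _)
  have hV : (0 : ℝ) < (Fintype.card (Fin (m + 1)) : ℝ) ^ d := by positivity
  refine ⟨signedSum P N ((Fintype.card (Fin (m + 1)) : ℝ) ^ d), ?_, ?_, ?_⟩
  · refine coeff_mul_sum_X_pow_nonneg _ (neg_one_le_coeff_signedSum hPN hV.le) fun a b ha hb => ?_
    have haN : a ∈ N := by
      rw [← filter_support_signedSum_neg hPN hV]
      exact mem_filter.2 ⟨mem_support_iff.2 ha.ne, ha⟩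
    obtain ⟨w, hw, rfl⟩ := mem_image.1 haN
    obtain ⟨v, hv, hle⟩ : ∃ v ∈ blockCorners s (U + d), homogenize D v ≤ homogenize D w + b :=
      exists_blockCorners_homogenize_le hs hsd (mem_sdiff.1 hw).1 hb
    refine ⟨homogenize D v, homogenize D w + b - homogenize D v, add_tsub_cancel_of_le hle, ?_, ?_⟩
    · have hdeg := congrArg Finsupp.degree (add_tsub_cancel_of_le hle)
      rw [map_add, map_add, hb,
        degree_homogenize (sum_le_of_mem_blockBox (blockCorners_subset_blockBox hs hv)),
        degree_homogenize (sum_le_of_mem_blockBox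
          (blockBox_mono (Nat.le_add_right _ _) (mem_sdiff.1 hw).1))] at hdeg
      omega
    · rw [coeff_signedSum _ hPN, if_pos (mem_image_of_mem _ hv)]
  · rw [filter_support_signedSum_pos hPN hV, card_image_of_injective _ (homogenize_injective D),
      card_blockCorners hs]
  · rw [filter_support_signedSum_neg hPN hV, card_image_of_injective _ (homogenize_injective D),
      card_sdiff_of_subset (blockCorners_subset_blockBox hs), card_blockBox, card_blockCorners hs,
      Nat.sub_mul, one_mul]

end Lattice

theorem stmt17 (n d : ℕ) (hn : 2 ≤ n) (hd : 1 ≤ d) :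
    ∃ p : MvPolynomial (Fin n) ℝ,
      (∀ m : Fin n →₀ ℕ, 0 ≤ (p * (∑ i, X i) ^ d).coeff m) ∧
      ((d : ℝ) ^ (n - 1) / 2 ^ (n * (n - 1) / 2)) ≤
        ((p.support.filter fun m => p.coeff m < 0).card : ℝ) /
          ((p.support.filter fun m => 0 < p.coeff m).card : ℝ) := by
  obtain ⟨m, rfl⟩ : ∃ m, n = m + 1 := ⟨n - 1, by omega⟩
  obtain ⟨s, hs, hsd, hsm, hprod⟩ := Nat.exists_blockSizes (m := m) (by omega) hd
  obtain ⟨p, hp, hpos, hneg⟩ := exists_coeff_mul_sum_X_pow_nonneg_card hs hsd (d ^ 2)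
  refine ⟨p, hp, ?_⟩
  rw [hpos, hneg, Nat.add_sub_cancel, div_le_div_iff₀ (by positivity) (by positivity)]
  have hcleared : d ^ m * (d ^ 2 + d) ^ m ≤ (∏ i, s i - 1) * (d ^ 2) ^ m * 2 ^ ((m + 1) * m / 2) :=
    calc d ^ m * (d ^ 2 + d) ^ m = (d + 1) ^ m * (d ^ 2) ^ m := by
          rw [← mul_pow, ← mul_pow]
          ring
      _ ≤ 2 ^ ((m + 1) * m / 2) * (∏ i, s i - 1) * (d ^ 2) ^ m := Nat.mul_le_mul_right _
          (Nat.succ_pow_le_two_pow_mul_prod_sub_one (by omega) hsm hprod)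
      _ = _ := by ring
  exact_mod_cast hcleared
end

section
/- Let q_k(x) = x₁^k + x₂^k + x₂^{k−1}x₃ + ⋯ + x₂^{k−1}xₙ − ε x₁x₂^{k−1} in n ≥ 2 variables. For every d < k − 1 and every ε > 0, the polynomial q_k·(x₁+⋯+xₙ)^d has a negative coefficient (namely that of x₁^{d+1}x₂^{k−1}). -/
/-!
Of the terms of `q`, only `-ε x₁ x₂^(k-1)` can contribute to the monomial `x₁^(d+1) x₂^(k-1)`
of `q ℓ^d`: since `d + 1 < k`, the terms `x₁^k` and `x₂^k` carry too high a power of `x₁`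
resp. `x₂`, and `x₂^(k-1) xᵢ` with `i ≥ 3` carries a variable the monomial lacks. The
coefficient is therefore `-ε` times the coefficient of `x₁^d` in `ℓ^d`, which is `1`.
-/

open MvPolynomial

section Coefficients

variable {R σ : Type*} [CommSemiring R]

theorem coeff_single_sum_X_pow [Fintype σ] (j : σ) (d : ℕ) :
    coeff (Finsupp.single j d) ((∑ i, X i : MvPolynomial σ R) ^ d) = 1 := by
  rw [coeff_sum_X_pow_of_fintype, if_pos (by simp),
    Finsupp.multinomial_eq_of_support_subset Finsupp.support_single_subset,
    Nat.multinomial_singleton, Nat.cast_one]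

theorem coeff_X_pow_mul_of_lt {m : σ →₀ ℕ} {s : σ} {c : ℕ} (h : m s < c)
    (p : MvPolynomial σ R) : coeff m (X s ^ c * p) = 0 := by
  rw [X_pow_eq_monomial, coeff_monomial_mul', if_neg]
  intro hle
  simpa using (hle s).trans_lt h

theorem coeff_X_mul_X_pow_mul_sum_X_pow [Fintype σ] (s t : σ) (a d : ℕ) :
    coeff (Finsupp.single s (d + 1) + Finsupp.single t a)
      (X s * X t ^ a * (∑ i, X i : MvPolynomial σ R) ^ d) = 1 := by
  have hm : Finsupp.single s (d + 1) + Finsupp.single t a =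
      Finsupp.single s 1 + (Finsupp.single t a + Finsupp.single s d) := by
    rw [add_comm d, Finsupp.single_add]; abel
  rw [hm, mul_assoc, coeff_X_mul, X_pow_eq_monomial, coeff_monomial_mul, one_mul,
    coeff_single_sum_X_pow]

end Coefficients

theorem stmt19 (n k d : ℕ) (hn : 2 ≤ n) (hd : d < k - 1)
    (ε : ℝ) (hε : 0 < ε)
    (q : MvPolynomial (Fin n) ℝ)
    (hq : q = X (⟨0, by omega⟩ : Fin n) ^ k + X (⟨1, by omega⟩ : Fin n) ^ k +
      (∑ i ∈ Finset.univ.filter fun i : Fin n => 2 ≤ (i : ℕ),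
        X (⟨1, by omega⟩ : Fin n) ^ (k - 1) * X i) -
      C ε * X (⟨0, by omega⟩ : Fin n) * X (⟨1, by omega⟩ : Fin n) ^ (k - 1)) :
    (q * (∑ i, X i) ^ d).coeff
      (Finsupp.single (⟨0, by omega⟩ : Fin n) (d + 1) +
        Finsupp.single (⟨1, by omega⟩ : Fin n) (k - 1)) < 0 := by
  subst hq
  set i₀ : Fin n := ⟨0, by omega⟩
  set i₁ : Fin n := ⟨1, by omega⟩
  set L : MvPolynomial (Fin n) ℝ := ∑ i, X i
  set m := Finsupp.single i₀ (d + 1) + Finsupp.single i₁ (k - 1)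
  have hm (i : Fin n) :
      m i = if (i : ℕ) = 0 then d + 1 else if (i : ℕ) = 1 then k - 1 else 0 := by
    simp only [m, i₀, i₁, Finsupp.add_apply, Finsupp.single_apply, Fin.ext_iff]
    split_ifs <;> omega
  have hi₀ : coeff m (X i₀ ^ k * L ^ d) = 0 :=
    coeff_X_pow_mul_of_lt (by simp [hm, i₀]; omega) _
  have hi₁ : coeff m (X i₁ ^ k * L ^ d) = 0 :=
    coeff_X_pow_mul_of_lt (by simp [hm, i₁]; omega) _
  have hrest : ∀ i ∈ Finset.univ.filter fun i : Fin n => 2 ≤ (i : ℕ),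
      coeff m (X i₁ ^ (k - 1) * X i * L ^ d) = 0 := by
    intro i hi
    have hi : 2 ≤ (i : ℕ) := (Finset.mem_filter.1 hi).2
    rw [mul_comm (X i₁ ^ (k - 1)), ← pow_one (X i), mul_assoc]
    exact coeff_X_pow_mul_of_lt (by rw [hm, if_neg (by omega), if_neg (by omega)]; omega) _
  have hi₀i₁ : coeff m (C ε * X i₀ * X i₁ ^ (k - 1) * L ^ d) = ε := by
    rw [mul_assoc, mul_assoc, coeff_C_mul, ← mul_assoc, coeff_X_mul_X_pow_mul_sum_X_pow, mul_one]
  rw [sub_mul, add_mul, add_mul, Finset.sum_mul, coeff_sub, coeff_add, coeff_add, coeff_sum,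
    Finset.sum_eq_zero hrest, hi₀, hi₁, hi₀i₁]
  linarith
end
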